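/- arXiv:2302.02532 — 4 statements merged into one kernel-verified Lean document; each statement's English description precedes it below -/
import Mathlib

section
/- For a (p,q)-shuffle s, the four sets s(→), s(↑), s(⌐), s(¬) form a partition of {0, 1, ..., p+q}. -/
/-- A `(p,q)`-shuffle is a sequence `(s_0, s_1, ..., s_{q+1})` of natural numbers with
`0 = s_0 ≤ s_1 ≤ ... ≤ s_q ≤ s_{q+1} = p`. -/
def IsShuffle (p q : ℕ) (s : Fin (q + 2) → ℕ) : Prop :=
  s 0 = 0 ∧ s (Fin.last (q + 1)) = p ∧ ∀ i : Fin (q + 1), s i.castSucc ≤ s i.succ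

/-- `s(→)`: horizontal interior vertices, together with `A` and `B`. -/
def sR (p q : ℕ) (s : Fin (q + 2) → ℕ) : Set ℕ :=
  {i | (0 < i ∧ i < p + q ∧
          ∃ k : Fin (q + 1), s k.castSucc + (k : ℕ) < i ∧ i < s k.succ + (k : ℕ))
     ∨ (i = 0 ∧ s 0 < s 1)
     ∨ (i = p + q ∧ s (Fin.last q).castSucc < s (Fin.last (q + 1)))}

/-- `s(↑)`: vertical vertices, together with `C`. -/
def sU (p q : ℕ) (s : Fin (q + 2) → ℕ) : Set ℕ :=
  {i | (i < p + q ∧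
          ∃ k : Fin (q + 1), i = s k.castSucc + (k : ℕ) ∧ s k.castSucc = s k.succ)
     ∨ (i = p + q ∧ s (Fin.last q).castSucc = s (Fin.last (q + 1)))}

/-- `s(⌐)`: `i = s_k + k - 1` with `s_{k-1} < s_k` for some `1 ≤ k ≤ q+1`. -/
def sL (p q : ℕ) (s : Fin (q + 2) → ℕ) : Set ℕ :=
  {i | 0 < i ∧ i < p + q ∧
     ∃ k : Fin (q + 1), i = s k.succ + (k : ℕ) ∧ s k.castSucc < s k.succ}

/-- `s(¬)`: `i = s_k + k` with `s_k < s_{k+1}` for some `0 ≤ k ≤ q`. -/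
def sN (p q : ℕ) (s : Fin (q + 2) → ℕ) : Set ℕ :=
  {i | 0 < i ∧ i < p + q ∧
     ∃ k : Fin (q + 1), i = s k.castSucc + (k : ℕ) ∧ s k.castSucc < s k.succ}

lemma shuffle_mono (p q : ℕ) (s : Fin (q + 2) → ℕ) (hs : IsShuffle p q s) : Monotone s :=
  Fin.monotone_iff_le_succ.mpr hs.2.2

lemma shuffle_exists (p q : ℕ) (s : Fin (q + 2) → ℕ) (hs : IsShuffle p q s) {i : ℕ}
    (hi : i ≤ p + q) :
    ∃ k : Fin (q + 1), s k.castSucc + (k : ℕ) ≤ i ∧ i ≤ s k.succ + (k : ℕ) := by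
  classical
  set t : ℕ → ℕ := fun j => s ⟨min j (q + 1), by omega⟩ with hts
  have ht : ∀ j (h : j < q + 2), t j = s ⟨j, h⟩ := by
    intro j h
    simp only [hts]
    congr 1
    exact Fin.ext (by simp; omega)
  have hP0 : t 0 + 0 ≤ i := by
    rw [ht 0 (by omega)]
    have h0 : s ⟨0, by omega⟩ = s 0 := congrArg s (Fin.ext rfl)
    rw [h0, hs.1]; omega
  set k0 := Nat.findGreatest (fun j => t j + j ≤ i) q with hk0
  have hk0q : k0 ≤ q := Nat.findGreatest_le q
  have hPk0 : t k0 + k0 ≤ i :=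
    Nat.findGreatest_spec (P := fun j => t j + j ≤ i) (Nat.zero_le q) hP0
  refine ⟨⟨k0, by omega⟩, ?_, ?_⟩
  · have : s (Fin.castSucc ⟨k0, by omega⟩) = t k0 := by
      rw [ht k0 (by omega)]; exact congrArg s (Fin.ext rfl)
    rw [this]; exact hPk0
  · rcases Nat.lt_or_ge k0 q with hlt | hge
    · have hng := Nat.findGreatest_is_greatest (by omega : k0 < k0 + 1) (by omega : k0 + 1 ≤ q)
      have : s (Fin.succ ⟨k0, by omega⟩) = t (k0 + 1) := by
        rw [ht (k0 + 1) (by omega)]; exact congrArg s (Fin.ext rfl)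
      rw [this]
      simp only [Fin.val_mk]
      omega
    · have hk0eq : k0 = q := le_antisymm hk0q hge
      have : s (Fin.succ ⟨k0, by omega⟩) = p := by
        rw [← hs.2.1]; exact congrArg s (Fin.ext (by simp [Fin.val_succ, hk0eq]))
      rw [this]
      simp only [Fin.val_mk]
      omega

lemma shuffle_unique (p q : ℕ) (s : Fin (q + 2) → ℕ) (hs : IsShuffle p q s) {i : ℕ}
    (k k' : Fin (q + 1))
    (h1 : s k.castSucc + (k : ℕ) ≤ i) (h2 : i ≤ s k.succ + (k : ℕ))
    (h3 : s k'.castSucc + (k' : ℕ) ≤ i) (h4 : i ≤ s k'.succ + (k' : ℕ)) : k = k' := by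
  have hm := shuffle_mono p q s hs
  by_contra hne
  rcases Nat.lt_or_ge (k : ℕ) (k' : ℕ) with h | h
  · have : s k.succ ≤ s k'.castSucc := hm (by simp [Fin.le_def]; omega)
    omega
  · rcases Nat.lt_or_ge (k' : ℕ) (k : ℕ) with h' | h'
    · have : s k'.succ ≤ s k.castSucc := hm (by simp [Fin.le_def]; omega)
      omega
    · exact hne (Fin.ext (by omega))

/-- For a `(p,q)`-shuffle `s`, the four sets `s(→)`, `s(↑)`, `s(⌐)`, `s(¬)` form a
partition of `{0, 1, ..., p+q}`. -/
theorem shuffle_partition (p q : ℕ) (s : Fin (q + 2) → ℕ) (hs : IsShuffle p q s) :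
    (sR p q s ∪ sU p q s ∪ sL p q s ∪ sN p q s = Set.Iic (p + q)) ∧
    Disjoint (sR p q s) (sU p q s) ∧ Disjoint (sR p q s) (sL p q s) ∧
    Disjoint (sR p q s) (sN p q s) ∧ Disjoint (sU p q s) (sL p q s) ∧
    Disjoint (sU p q s) (sN p q s) ∧ Disjoint (sL p q s) (sN p q s) := by
  have hm := shuffle_mono p q s hs
  have hsp : ∀ x : Fin (q + 2), s x ≤ p := fun x =>
    le_of_le_of_eq (hm (Fin.le_last x)) hs.2.1
  have hcong : ∀ a b : Fin (q + 2), (a : ℕ) = (b : ℕ) → s a = s b :=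
    fun a b h => congrArg s (Fin.ext h)
  refine ⟨?_, ?_, ?_, ?_, ?_, ?_, ?_⟩
  · ext i
    simp only [Set.mem_union, Set.mem_Iic, sR, sU, sL, sN, Set.mem_setOf_eq]
    constructor
    · rintro (((h | h | h) | (h | h)) | ⟨h, _⟩ | ⟨h, _⟩) <;> omega
    · intro hi
      obtain ⟨k, ha, hb⟩ := shuffle_exists p q s hs hi
      have hkq : (k : ℕ) ≤ q := by omega
      have hscss : s k.castSucc ≤ s k.succ := hs.2.2 k
      have hssp : s k.succ ≤ p := hsp _
      have hscp : s k.castSucc ≤ p := hsp _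
      rcases ha.lt_or_eq with ha' | ha'
      · rcases hb.lt_or_eq with hb' | hb'
        · exact Or.inl (Or.inl (Or.inl (Or.inl ⟨by omega, by omega, k, ha', hb'⟩)))
        · have hlt : s k.castSucc < s k.succ := by omega
          by_cases hip : i < p + q
          · exact Or.inl (Or.inr ⟨by omega, hip, k, hb', hlt⟩)
          · have hip' : i = p + q := by omega
            have hkq' : (k : ℕ) = q := by omega
            refine Or.inl (Or.inl (Or.inl (Or.inr (Or.inr ⟨hip', ?_⟩))))
            have e1 : s (Fin.last q).castSucc = s k.castSucc := hcong _ _ (by simp [hkq'])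
            have e2 : s (Fin.last (q + 1)) = s k.succ := hcong _ _ (by simp [hkq'])
            rw [e1, e2]; exact hlt
      · rcases hscss.lt_or_eq with hlt | heq
        · by_cases hi0 : i = 0
          · have hk0 : (k : ℕ) = 0 := by omega
            refine Or.inl (Or.inl (Or.inl (Or.inr (Or.inl ⟨hi0, ?_⟩))))
            have e1 : s 0 = s k.castSucc := hcong _ _ (by simp [hk0])
            have e2 : s 1 = s k.succ := hcong _ _ (by simp [hk0])
            rw [e1, e2]; exact hlt
          · have hip : i < p + q := by omega
            exact Or.inr ⟨by omega, hip, k, ha'.symm, hlt⟩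
        · by_cases hip : i < p + q
          · exact Or.inl (Or.inl (Or.inr (Or.inl ⟨hip, k, ha'.symm, heq⟩)))
          · have hip' : i = p + q := by omega
            have hkq' : (k : ℕ) = q := by omega
            refine Or.inl (Or.inl (Or.inr (Or.inr ⟨hip', ?_⟩)))
            have e1 : s (Fin.last q).castSucc = s k.castSucc := hcong _ _ (by simp [hkq'])
            have e2 : s (Fin.last (q + 1)) = s k.succ := hcong _ _ (by simp [hkq'])
            rw [e1, e2]; exact heq
  · -- R U
    rw [Set.disjoint_left]
    intro i hR hU
    simp only [sR, sU, Set.mem_setOf_eq] at hR hU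
    obtain (⟨hi0, hip, k, h1, h2⟩ | ⟨hi0, hA⟩ | ⟨hip, hB⟩) := hR <;>
      obtain (⟨hip', k', h1', h2'⟩ | ⟨hip', hC⟩) := hU
    · have hk := shuffle_unique p q s hs k k' (le_of_lt h1) (le_of_lt h2)
        (by omega) (by omega)
      subst hk; omega
    · omega
    · have hk0 : (k' : ℕ) = 0 := by omega
      have e1 : s 0 = s k'.castSucc := hcong _ _ (by simp [hk0])
      have e2 : s 1 = s k'.succ := hcong _ _ (by simp [hk0])
      omega
    · have hq : q = 0 := by omega
      have e1 : s 0 = s (Fin.last q).castSucc := hcong _ _ (by simp [hq])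
      have e2 : s 1 = s (Fin.last (q + 1)) := hcong _ _ (by simp [hq])
      omega
    · omega
    · omega
  · -- R L
    rw [Set.disjoint_left]
    intro i hR hL
    simp only [sR, sL, Set.mem_setOf_eq] at hR hL
    obtain ⟨hl0, hlp, k', h1', h2'⟩ := hL
    obtain (⟨hi0, hip, k, h1, h2⟩ | ⟨hi0, hA⟩ | ⟨hip, hB⟩) := hR
    · have hk := shuffle_unique p q s hs k k' (le_of_lt h1) (le_of_lt h2)
        (by omega) (by omega)
      subst hk; omega
    · omega
    · omega
  · -- R N
    rw [Set.disjoint_left]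
    intro i hR hN
    simp only [sR, sN, Set.mem_setOf_eq] at hR hN
    obtain ⟨hl0, hlp, k', h1', h2'⟩ := hN
    obtain (⟨hi0, hip, k, h1, h2⟩ | ⟨hi0, hA⟩ | ⟨hip, hB⟩) := hR
    · have hk := shuffle_unique p q s hs k k' (le_of_lt h1) (le_of_lt h2)
        (by omega) (by omega)
      subst hk; omega
    · omega
    · omega
  · -- U L
    rw [Set.disjoint_left]
    intro i hU hL
    simp only [sU, sL, Set.mem_setOf_eq] at hU hL
    obtain ⟨hl0, hlp, k', h1', h2'⟩ := hL
    obtain (⟨hip, k, h1, h2⟩ | ⟨hip, hC⟩) := hU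
    · have hk := shuffle_unique p q s hs (i := i) k k' (by omega) (by omega)
        (by omega) (by omega)
      subst hk; omega
    · omega
  · -- U N
    rw [Set.disjoint_left]
    intro i hU hN
    simp only [sU, sN, Set.mem_setOf_eq] at hU hN
    obtain ⟨hl0, hlp, k', h1', h2'⟩ := hN
    obtain (⟨hip, k, h1, h2⟩ | ⟨hip, hC⟩) := hU
    · have hk := shuffle_unique p q s hs (i := i) k k' (by omega) (by omega)
        (by omega) (by omega)
      subst hk; omega
    · omega
  · -- L N
    rw [Set.disjoint_left]
    intro i hL hN
    simp only [sL, sN, Set.mem_setOf_eq] at hL hN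
    obtain ⟨hl0, hlp, k, h1, h2⟩ := hL
    obtain ⟨hl0', hlp', k', h1', h2'⟩ := hN
    have hk := shuffle_unique p q s hs (i := i) k k' (by omega) (by omega)
      (by omega) (by omega)
    subst hk; omega
end

section
/- The map sending (i, s), where s is a (p,q)-shuffle and i ∈ s(⌐), to (i, α_i(s)), where α_i(s) is obtained from s by replacing s_k with s_k - 1 at the index k with i = s_k + k - 1, is a bijection from the disjoint union over shuffles s of s(⌐) × {s} to the disjoint union over shuffles s of s(¬) × {s}. -/
/-- The disjoint union over shuffles `s` of `s(⌐) × {s}`. -/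
def LSig (p q : ℕ) :=
  Σ s : {s : Fin (q + 2) → ℕ // IsShuffle p q s}, {i : ℕ // i ∈ sL p q s.1}

/-- The disjoint union over shuffles `s` of `s(¬) × {s}`. -/
def NSig (p q : ℕ) :=
  Σ s : {s : Fin (q + 2) → ℕ // IsShuffle p q s}, {i : ℕ // i ∈ sN p q s.1}

/-!
Since `s` is monotone, `k ↦ s (k + 1) + k` and `k ↦ s k + k` are strictly increasing, so the
index (the "corner") witnessing `i ∈ s(⌐)` or `i ∈ s(¬)` is unique. Lowering `s (k + 1)` by one
turns a `⌐`-corner at `k` into a `¬`-corner at `k + 1` with the same `i`, and raising `s l` by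
one turns a `¬`-corner at `l` back into a `⌐`-corner at `l - 1`; the two operations undo each
other.
-/

open Function

theorem Monotone.update_of_le_of_le {α β : Type*} [PartialOrder α] [Preorder β] [DecidableEq α]
    {f : α → β} (hf : Monotone f) {a : α} {b : β} (hlt : ∀ x < a, f x ≤ b)
    (hgt : ∀ x, a < x → b ≤ f x) : Monotone (update f a b) := by
  intro x y hxy
  by_cases hx : x = a <;> by_cases hy : y = a
  · simp [hx, hy]
  · subst hx
    simpa [hy] using hgt y (lt_of_le_of_ne hxy (Ne.symm hy))
  · subst hy
    simpa [hx] using hlt x (lt_of_le_of_ne hxy hx)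
  · simpa [hx, hy] using hf hxy

namespace Fin

variable {n : ℕ} {s : Fin (n + 1) → ℕ}

theorem strictMono_succ_add (hs : Monotone s) : StrictMono fun k : Fin n ↦ s k.succ + (k : ℕ) := by
  intro a b hab
  have := hs (succ_le_succ_iff.mpr hab.le)
  dsimp only
  omega

theorem strictMono_castSucc_add (hs : Monotone s) :
    StrictMono fun k : Fin n ↦ s k.castSucc + (k : ℕ) := by
  intro a b hab
  have := hs (castSucc_le_castSucc_iff.mpr hab.le)
  dsimp only
  omega

theorem monotone_update_succ_sub_one (hs : Monotone s) {k : Fin n}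
    (hk : s k.castSucc < s k.succ) : Monotone (update s k.succ (s k.succ - 1)) := by
  refine hs.update_of_le_of_le (fun x hx ↦ ?_) (fun x hx ↦ ?_)
  · have := hs (le_castSucc_iff.mpr hx)
    omega
  · exact (Nat.sub_le _ _).trans (hs hx.le)

theorem monotone_update_castSucc_add_one (hs : Monotone s) {k : Fin n}
    (hk : s k.castSucc < s k.succ) : Monotone (update s k.castSucc (s k.castSucc + 1)) := by
  refine hs.update_of_le_of_le (fun x hx ↦ (hs hx.le).trans (Nat.le_succ _)) (fun x hx ↦ ?_)
  exact hk.trans_le (hs (castSucc_lt_iff_succ_le.mp hx))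

theorem corner_update_succ_sub_one (hs : Monotone s) {i : ℕ} {k l : Fin n}
    (hlk : l.castSucc = k.succ) (hik : i = s k.succ + k) (hk : s k.castSucc < s k.succ) :
    i = update s k.succ (s k.succ - 1) l.castSucc + l ∧
      update s k.succ (s k.succ - 1) l.castSucc < update s k.succ (s k.succ - 1) l.succ := by
  have hl : (l : ℕ) = k + 1 := by simpa using congrArg Fin.val hlk
  have hsucc : s k.succ ≤ s l.succ := hs (by simp [le_def, hl])
  rw [hlk, update_self, update_of_ne (by simp [Fin.ext_iff, hl])]
  omega

theorem corner_update_castSucc_add_one (hs : Monotone s) {i : ℕ} {k l : Fin n}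
    (hlk : l.castSucc = k.succ) (hil : i = s l.castSucc + l) :
    i = update s l.castSucc (s l.castSucc + 1) k.succ + k ∧
      update s l.castSucc (s l.castSucc + 1) k.castSucc <
        update s l.castSucc (s l.castSucc + 1) k.succ := by
  have hlv : (l : ℕ) = k + 1 := by simpa using congrArg Fin.val hlk
  have hcast : s k.castSucc ≤ s l.castSucc := hs (by simp [le_def, hlv])
  rw [← hlk, update_self, update_of_ne (by simp [Fin.ext_iff, hlv])]
  omega

end Fin

namespace IsShuffle

variable {p q : ℕ} {s : Fin (q + 2) → ℕ}

theorem monotone (hs : IsShuffle p q s) : Monotone s :=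
  Fin.monotone_iff_le_succ.mpr hs.2.2

theorem update {j : Fin (q + 2)} {b : ℕ} (hs : IsShuffle p q s) (h0 : j ≠ 0)
    (hlast : j ≠ Fin.last (q + 1)) (hm : Monotone (update s j b)) :
    IsShuffle p q (update s j b) := by
  refine ⟨?_, ?_, Fin.monotone_iff_le_succ.mp hm⟩
  · rw [update_of_ne h0.symm, hs.1]
  · rw [update_of_ne hlast.symm, hs.2.1]

theorem succ_ne_last (hs : IsShuffle p q s) {i : ℕ} {k : Fin (q + 1)} (hi : i < p + q)
    (hik : i = s k.succ + k) : k.succ ≠ Fin.last (q + 1) := by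
  intro hk
  have hkq : (k : ℕ) = q := by simpa using congrArg Fin.val hk
  rw [hk, hs.2.1] at hik
  omega

theorem castSucc_ne_zero (hs : IsShuffle p q s) {i : ℕ} {l : Fin (q + 1)} (hi : 0 < i)
    (hil : i = s l.castSucc + l) : l.castSucc ≠ 0 := by
  intro hl
  have hl0 : (l : ℕ) = 0 := by simpa using congrArg Fin.val hl
  rw [hl, hs.1] at hil
  omega

end IsShuffle

section Flip

variable {p q : ℕ}

namespace LSig

noncomputable def corner (x : LSig p q) : Fin (q + 1) :=
  x.2.2.2.2.choose

theorem corner_spec (x : LSig p q) :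
    (x.2 : ℕ) = x.1.1 x.corner.succ + x.corner ∧ x.1.1 x.corner.castSucc < x.1.1 x.corner.succ :=
  x.2.2.2.2.choose_spec

theorem eq_corner (x : LSig p q) {k : Fin (q + 1)} (hk : (x.2 : ℕ) = x.1.1 k.succ + k) :
    k = x.corner :=
  (Fin.strictMono_succ_add x.1.2.monotone).injective (hk.symm.trans x.corner_spec.1)

theorem corner_succ_ne_last (x : LSig p q) : x.corner.succ ≠ Fin.last (q + 1) :=
  x.1.2.succ_ne_last x.2.2.2.1 x.corner_spec.1

noncomputable def toNSig (x : LSig p q) : NSig p q :=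
  ⟨⟨update x.1.1 x.corner.succ (x.1.1 x.corner.succ - 1),
      x.1.2.update (Fin.succ_ne_zero _) x.corner_succ_ne_last
        (Fin.monotone_update_succ_sub_one x.1.2.monotone x.corner_spec.2)⟩,
    x.2.1, x.2.2.1, x.2.2.2.1, _,
      Fin.corner_update_succ_sub_one x.1.2.monotone
        (Fin.castSucc_castPred _ x.corner_succ_ne_last) x.corner_spec.1 x.corner_spec.2⟩

theorem toNSig_fst (x : LSig p q) :
    (x.toNSig.1 : Fin (q + 2) → ℕ) = update x.1.1 x.corner.succ (x.1.1 x.corner.succ - 1) :=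
  rfl

end LSig

namespace NSig

noncomputable def corner (y : NSig p q) : Fin (q + 1) :=
  y.2.2.2.2.choose

theorem corner_spec (y : NSig p q) :
    (y.2 : ℕ) = y.1.1 y.corner.castSucc + y.corner ∧
      y.1.1 y.corner.castSucc < y.1.1 y.corner.succ :=
  y.2.2.2.2.choose_spec

theorem eq_corner (y : NSig p q) {l : Fin (q + 1)} (hl : (y.2 : ℕ) = y.1.1 l.castSucc + l) :
    l = y.corner :=
  (Fin.strictMono_castSucc_add y.1.2.monotone).injective (hl.symm.trans y.corner_spec.1)

theorem corner_castSucc_ne_zero (y : NSig p q) : y.corner.castSucc ≠ 0 :=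
  y.1.2.castSucc_ne_zero y.2.2.1 y.corner_spec.1

noncomputable def toLSig (y : NSig p q) : LSig p q :=
  ⟨⟨update y.1.1 y.corner.castSucc (y.1.1 y.corner.castSucc + 1),
      y.1.2.update y.corner_castSucc_ne_zero (Fin.castSucc_ne_last _)
        (Fin.monotone_update_castSucc_add_one y.1.2.monotone y.corner_spec.2)⟩,
    y.2.1, y.2.2.1, y.2.2.2.1, _,
      Fin.corner_update_castSucc_add_one y.1.2.monotone
        (Fin.succ_pred _ y.corner_castSucc_ne_zero).symm y.corner_spec.1⟩

theorem toLSig_fst (y : NSig p q) :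
    (y.toLSig.1 : Fin (q + 2) → ℕ) =
      update y.1.1 y.corner.castSucc (y.1.1 y.corner.castSucc + 1) :=
  rfl

end NSig

theorem LSig.toNSig_corner (x : LSig p q) : x.toNSig.corner.castSucc = x.corner.succ := by
  rw [← x.toNSig.eq_corner (Fin.corner_update_succ_sub_one x.1.2.monotone
    (Fin.castSucc_castPred _ x.corner_succ_ne_last) x.corner_spec.1 x.corner_spec.2).1]
  exact Fin.castSucc_castPred _ _

theorem NSig.toLSig_corner (y : NSig p q) : y.toLSig.corner.succ = y.corner.castSucc := by
  rw [← y.toLSig.eq_corner (Fin.corner_update_castSucc_add_one y.1.2.monotone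
    (Fin.succ_pred _ y.corner_castSucc_ne_zero).symm y.corner_spec.1).1]
  exact Fin.succ_pred _ _

theorem LSig.toLSig_toNSig (x : LSig p q) : x.toNSig.toLSig = x := by
  refine Sigma.subtype_ext (Subtype.ext ?_) rfl
  have hpos : 0 < x.1.1 x.corner.succ := (Nat.zero_le _).trans_lt x.corner_spec.2
  rw [NSig.toLSig_fst, x.toNSig_corner, toNSig_fst, update_self, Nat.sub_add_cancel hpos,
    update_idem, update_eq_self]

theorem NSig.toNSig_toLSig (y : NSig p q) : y.toLSig.toNSig = y := by
  refine Sigma.subtype_ext (Subtype.ext ?_) rfl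
  rw [LSig.toNSig_fst, y.toLSig_corner, toLSig_fst, update_self, Nat.add_sub_cancel,
    update_idem, update_eq_self]

noncomputable def flipEquiv (p q : ℕ) : LSig p q ≃ NSig p q where
  toFun := LSig.toNSig
  invFun := NSig.toLSig
  left_inv := LSig.toLSig_toNSig
  right_inv := NSig.toNSig_toLSig

end Flip

/-- The map `(i, s) ↦ (i, α_i(s))`, where `α_i(s)` replaces the entry `s_k` with
`s_k - 1` at the index `k` with `i = s_k + k - 1`, is a bijection
`⨿_s s(⌐) × {s} → ⨿_s s(¬) × {s}`. -/
theorem flip_bijection (p q : ℕ) :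
    ∃ F : LSig p q → NSig p q, Function.Bijective F ∧
      ∀ x : LSig p q, ((F x).2 : ℕ) = (x.2 : ℕ) ∧
        ∀ k : Fin (q + 1),
          ((x.2 : ℕ) = x.1.1 k.succ + (k : ℕ) ∧ x.1.1 k.castSucc < x.1.1 k.succ) →
          (F x).1.1 = Function.update x.1.1 k.succ (x.1.1 k.succ - 1) := by
  refine ⟨flipEquiv p q, (flipEquiv p q).bijective, fun x ↦ ⟨rfl, fun k hk ↦ ?_⟩⟩
  rw [x.eq_corner hk.1]
  exact x.toNSig_fst
end

section
/- Let K with vertex set {1,...,n}, let K(K) = F[K] ⊗ Λ(x_1,...,x_n) be the Koszul complex of the Stanley-Reisner ring F[K] with dx_i = v_i, and let R(K) = K(K)/(v_i², v_i x_i : i = 1,...,n). Then the map φ : C*(K) → R(K) sending the Kronecker dual σ* ∈ C̃*(K_I) of a simplex σ = {i_1 < ... < i_k} ∈ K_I with I − σ = {j_1 < ... < j_l} to v_{i_1}···v_{i_k} x_{j_1}···x_{j_l} is an isomorphism of differential graded algebras. -/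
/-- An abstract simplicial complex (given as a finite collection of finite subsets of the
finite vertex type `V`, closed under taking subsets). -/
def IsComplex {V : Type*} [DecidableEq V] (K : Finset (Finset V)) : Prop :=
  ∀ σ ∈ K, ∀ τ ⊆ σ, τ ∈ K

variable {V : Type*} [Fintype V] [LinearOrder V] (F : Type*) [Field F]

/-- Basis of the dga `𝒞*(K) = F ⊕ ⨁_{∅ ≠ I ⊆ V(K)} C̃^{*-|I|-1}(K_I)`: pairs `(I, σ)`
with `σ ∈ K_I`, the pair `(I, σ)` encoding the Kronecker dual `σ* ∈ C̃^{|σ|-1}(K_I)`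
(of total degree `|I| + |σ|`); the pair `(∅, ∅)` encodes the unit of `F = 𝒞^0(K)`. -/
def BC (K : Finset (Finset V)) : Type _ :=
  {x : Finset V × Finset V // x.2 ⊆ x.1 ∧ x.2 ∈ K}

/-- Basis of `R(K) = K(K)/(v_i², v_i x_i)`, the quotient of the Koszul complex
`K(K) = F[K] ⊗ Λ(x_1,...,x_n)` of the Stanley–Reisner ring: pairs `(S, T)` encoding the
monomials `v_S x_T` with `S ∈ K` and `S ∩ T = ∅` (of degree `2|S| + |T|`). -/
def BR (K : Finset (Finset V)) : Type _ :=
  {x : Finset V × Finset V // x.1 ∈ K ∧ Disjoint x.1 x.2}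

/-- Number of inversions between two finite sets (used for Koszul signs). -/
def inversions (σ τ : Finset V) : ℕ :=
  ((σ ×ˢ τ).filter fun ab => ab.2 < ab.1).card

/-- The product of the dga `𝒞*(K)`: `σ* · τ* = ι_{I,J}^*(σ* ⋆ τ*)` for `I ∩ J = ∅`
(with the Koszul sign) and `0` for `I ∩ J ≠ ∅`. -/
noncomputable def mulC (K : Finset (Finset V)) (x y : BC (V := V) K →₀ F) :
    BC (V := V) K →₀ F :=
  x.sum fun a r => y.sum fun b t =>
    if h : a.1.1 ∩ b.1.1 = ∅ ∧ a.1.2 ∪ b.1.2 ∈ K then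
      ((r * t) * (-1 : F) ^ inversions (a.1.1 \ a.1.2) (b.1.1 \ b.1.2)) •
        Finsupp.single
          (⟨(a.1.1 ∪ b.1.1, a.1.2 ∪ b.1.2),
            Finset.union_subset_union a.2.1 b.2.1, h.2⟩ : BC K) 1
    else 0

/-- The differential of `𝒞*(K)`, induced by the simplicial coboundary maps of the
reduced cochain complexes `C̃*(K_I)`. -/
noncomputable def deltaC (K : Finset (Finset V)) (x : BC (V := V) K →₀ F) :
    BC (V := V) K →₀ F :=
  x.sum fun a r => ∑ v : V,
    if h : v ∈ a.1.1 \ a.1.2 ∧ insert v a.1.2 ∈ K then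
      (r * (-1 : F) ^ (((a.1.1 \ a.1.2).filter (· < v)).card)) •
        Finsupp.single
          (⟨(a.1.1, insert v a.1.2),
            Finset.insert_subset_iff.mpr ⟨(Finset.mem_sdiff.mp h.1).1, a.2.1⟩,
            h.2⟩ : BC K) 1
    else 0

/-- The product of `R(K)`: `(v_S x_T)(v_{S'} x_{T'}) = ± v_{S∪S'} x_{T∪T'}`, which is
zero when the supports meet (by `v_i² = x_i² = v_i x_i = 0`) or `S ∪ S' ∉ K`. -/
noncomputable def mulR (K : Finset (Finset V)) (x y : BR (V := V) K →₀ F) :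
    BR (V := V) K →₀ F :=
  x.sum fun a r => y.sum fun b t =>
    if h : (a.1.1 ∪ a.1.2) ∩ (b.1.1 ∪ b.1.2) = ∅ ∧ a.1.1 ∪ b.1.1 ∈ K then
      ((r * t) * (-1 : F) ^ inversions a.1.2 b.1.2) •
        Finsupp.single
          (⟨(a.1.1 ∪ b.1.1, a.1.2 ∪ b.1.2), h.2, by
            have h1 := a.2.2
            have h2 := b.2.2
            have h3 : Disjoint (a.1.1 ∪ a.1.2) (b.1.1 ∪ b.1.2) :=
              Finset.disjoint_iff_inter_eq_empty.mpr h.1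
            simp only [Finset.disjoint_union_left, Finset.disjoint_union_right] at *
            tauto⟩ : BR K) 1
    else 0

/-- The Koszul differential of `R(K)`: the derivation with `d v_i = 0`, `d x_i = v_i`. -/
noncomputable def dR (K : Finset (Finset V)) (x : BR (V := V) K →₀ F) :
    BR (V := V) K →₀ F :=
  x.sum fun a r => ∑ v : V,
    if h : v ∈ a.1.2 ∧ insert v a.1.1 ∈ K then
      (r * (-1 : F) ^ ((a.1.2.filter (· < v)).card)) •
        Finsupp.single
          (⟨(insert v a.1.1, a.1.2.erase v), h.2, by
            have hd := a.2.2
            refine Finset.disjoint_left.mpr fun x hx hx2 => ?_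
            rcases Finset.mem_insert.mp hx with rfl | hx1
            · exact (Finset.notMem_erase _ _) hx2
            · exact (Finset.disjoint_left.mp hd hx1) (Finset.mem_of_mem_erase hx2)⟩ :
            BR K) 1
    else 0

/-- The map `φ : 𝒞*(K) → R(K)`, `σ* ↦ v_σ x_{I∖σ}` for `σ* ∈ C̃*(K_I)`. -/
noncomputable def phi (K : Finset (Finset V)) (x : BC (V := V) K →₀ F) :
    BR (V := V) K →₀ F :=
  Finsupp.mapDomain
    (fun a : BC (V := V) K =>
      (⟨(a.1.2, a.1.1 \ a.1.2), a.2.2, Finset.disjoint_sdiff⟩ : BR K)) x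

/-! On bases, `φ` is the bijection `(I, σ) ↦ (σ, I ∖ σ)` with inverse `(S, T) ↦ (S ∪ T, S)`.
Both products and both differentials are the (bi)linear extensions of their values on basis
elements, and these values correspond under the bijection: `I ∩ J = ∅` with `σ ⊆ I`, `τ ⊆ J`
gives `(I ∪ J) ∖ (σ ∪ τ) = (I ∖ σ) ∪ (J ∖ τ)`, so the Koszul signs (computed on `I ∖ σ`, the
exterior part of `φ(σ*)`) agree, and `I ∖ insert v σ = (I ∖ σ).erase v` matches the two
differentials term by term. -/

namespace Finsupp

variable {α β R : Type*} [Semiring R]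

theorem mapDomain_sum_smul (f : α → β) (x : α →₀ R) {μ : α → α →₀ R} {ν : β → β →₀ R}
    (h : ∀ a, mapDomain f (μ a) = ν (f a)) :
    mapDomain f (x.sum fun a r => r • μ a) = (mapDomain f x).sum fun b r => r • ν b := by
  rw [sum_mapDomain_index (by simp) fun _ _ _ => add_smul _ _ _]
  simp only [mapDomain_sum, mapDomain_smul, h]

theorem mapDomain_sum_sum_smul (f : α → β) (x y : α →₀ R) {μ : α → α → α →₀ R}
    {ν : β → β → β →₀ R} (h : ∀ a b, mapDomain f (μ a b) = ν (f a) (f b)) :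
    mapDomain f (x.sum fun a r => y.sum fun b t => (r * t) • μ a b) =
      (mapDomain f x).sum fun a r => (mapDomain f y).sum fun b t => (r * t) • ν a b := by
  rw [sum_mapDomain_index (by simp) fun _ _ _ => by simp only [add_mul, add_smul, sum_add]]
  simp only [mapDomain_sum, mapDomain_smul, h]
  refine sum_congr fun a _ => ?_
  rw [sum_mapDomain_index (by simp) fun _ _ _ => by simp only [mul_add, add_smul]]

end Finsupp

namespace Finset

variable {α : Type*} [DecidableEq α] {s t u v : Finset α}

theorem union_sdiff_union_of_disjoint (hsv : Disjoint s v) (htu : Disjoint t u) :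
    (s ∪ t) \ (u ∪ v) = s \ u ∪ t \ v := by
  rw [union_sdiff_distrib, sdiff_union_distrib, sdiff_union_distrib, hsv.sdiff_eq_left,
    htu.sdiff_eq_left, inter_eq_left.2 sdiff_subset, inter_eq_right.2 sdiff_subset]

theorem disjoint_union_union_of_disjoint (hst : Disjoint s t) (huv : Disjoint u v)
    (h : Disjoint (s ∪ t) (u ∪ v)) : Disjoint (s ∪ u) (t ∪ v) := by
  simp only [disjoint_union_left, disjoint_union_right] at *
  tauto

end Finset

variable (K : Finset (Finset V))

section

omit [Fintype V]

@[simps apply_coe]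
def BC.equivBR : BC K ≃ BR K where
  toFun a := ⟨(a.1.2, a.1.1 \ a.1.2), a.2.2, Finset.disjoint_sdiff⟩
  invFun b := ⟨(b.1.1 ∪ b.1.2, b.1.1), Finset.subset_union_left, b.2.1⟩
  left_inv a := Subtype.ext (Prod.ext (Finset.union_sdiff_of_subset a.2.1) rfl)
  right_inv b := Subtype.ext (Prod.ext rfl (Finset.union_sdiff_cancel_left b.2.2))

theorem phi_eq_mapDomain : phi F K = Finsupp.mapDomain (BC.equivBR K) := rfl

theorem phi_bijective : Function.Bijective (phi F K) :=
  ⟨Finsupp.mapDomain_injective (BC.equivBR K).injective,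
    Finsupp.mapDomain_surjective (BC.equivBR K).surjective⟩

theorem mulC_eq_sum (x y : BC K →₀ F) :
    mulC F K x y = x.sum fun a r => y.sum fun b t => (r * t) •
      if h : a.1.1 ∩ b.1.1 = ∅ ∧ a.1.2 ∪ b.1.2 ∈ K then
        (-1 : F) ^ inversions (a.1.1 \ a.1.2) (b.1.1 \ b.1.2) •
          Finsupp.single
            ⟨(a.1.1 ∪ b.1.1, a.1.2 ∪ b.1.2), Finset.union_subset_union a.2.1 b.2.1, h.2⟩ 1
      else 0 := by
  refine Finsupp.sum_congr fun a _ => Finsupp.sum_congr fun b _ => ?_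
  split_ifs
  · exact mul_smul _ _ _
  · exact (smul_zero _).symm

theorem mulR_eq_sum (x y : BR K →₀ F) :
    mulR F K x y = x.sum fun a r => y.sum fun b t => (r * t) •
      if h : (a.1.1 ∪ a.1.2) ∩ (b.1.1 ∪ b.1.2) = ∅ ∧ a.1.1 ∪ b.1.1 ∈ K then
        (-1 : F) ^ inversions a.1.2 b.1.2 •
          Finsupp.single ⟨(a.1.1 ∪ b.1.1, a.1.2 ∪ b.1.2), h.2,
            Finset.disjoint_union_union_of_disjoint a.2.2 b.2.2
              (Finset.disjoint_iff_inter_eq_empty.2 h.1)⟩ 1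
      else 0 := by
  refine Finsupp.sum_congr fun a _ => Finsupp.sum_congr fun b _ => ?_
  split_ifs
  · exact mul_smul _ _ _
  · exact (smul_zero _).symm

theorem phi_mulC (x y : BC K →₀ F) :
    phi F K (mulC F K x y) = mulR F K (phi F K x) (phi F K y) := by
  rw [mulC_eq_sum, mulR_eq_sum, phi_eq_mapDomain]
  refine Finsupp.mapDomain_sum_sum_smul _ _ _ fun a b => ?_
  simp only [BC.equivBR_apply_coe, Finset.union_sdiff_of_subset a.2.1,
    Finset.union_sdiff_of_subset b.2.1]
  split_ifs with h
  · rw [Finsupp.mapDomain_smul]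
    refine congrArg _ (Finsupp.mapDomain_single.trans ?_)
    congr 1
    have hIJ : Disjoint a.1.1 b.1.1 := Finset.disjoint_iff_inter_eq_empty.2 h.1
    exact Subtype.ext (Prod.ext rfl (Finset.union_sdiff_union_of_disjoint
      (hIJ.mono_right b.2.1) (hIJ.symm.mono_right a.2.1)))
  · exact Finsupp.mapDomain_zero

end

theorem deltaC_eq_sum (x : BC K →₀ F) :
    deltaC F K x = x.sum fun a r => r • ∑ v : V,
      if h : v ∈ a.1.1 \ a.1.2 ∧ insert v a.1.2 ∈ K then
        (-1 : F) ^ ((a.1.1 \ a.1.2).filter (· < v)).card •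
          Finsupp.single ⟨(a.1.1, insert v a.1.2),
            Finset.insert_subset (Finset.mem_sdiff.1 h.1).1 a.2.1, h.2⟩ 1
      else 0 := by
  refine Finsupp.sum_congr fun a _ => ?_
  rw [Finset.smul_sum]
  refine Finset.sum_congr rfl fun v _ => ?_
  split_ifs
  · exact mul_smul _ _ _
  · exact (smul_zero _).symm

theorem dR_eq_sum (x : BR K →₀ F) :
    dR F K x = x.sum fun a r => r • ∑ v : V,
      if h : v ∈ a.1.2 ∧ insert v a.1.1 ∈ K then
        (-1 : F) ^ (a.1.2.filter (· < v)).card •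
          Finsupp.single ⟨(insert v a.1.1, a.1.2.erase v), h.2,
            Finset.disjoint_insert_left.2
              ⟨Finset.notMem_erase v _, a.2.2.mono_right (Finset.erase_subset v _)⟩⟩ 1
      else 0 := by
  refine Finsupp.sum_congr fun a _ => ?_
  rw [Finset.smul_sum]
  refine Finset.sum_congr rfl fun v _ => ?_
  split_ifs
  · exact mul_smul _ _ _
  · exact (smul_zero _).symm

theorem phi_deltaC (x : BC K →₀ F) : phi F K (deltaC F K x) = dR F K (phi F K x) := by
  rw [deltaC_eq_sum, dR_eq_sum, phi_eq_mapDomain]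
  refine Finsupp.mapDomain_sum_smul _ _ fun a => ?_
  rw [Finsupp.mapDomain_finsetSum]
  refine Finset.sum_congr rfl fun v _ => ?_
  simp only [BC.equivBR_apply_coe]
  split_ifs
  · rw [Finsupp.mapDomain_smul]
    refine congrArg _ (Finsupp.mapDomain_single.trans ?_)
    congr 1
    exact Subtype.ext (Prod.ext rfl (Finset.sdiff_insert _ _ _))
  · exact Finsupp.mapDomain_zero

theorem phi_dga_iso (K : Finset (Finset V)) [DecidableEq V] :
    Function.Bijective (phi F K) ∧
    (∀ x y, phi F K (x + y) = phi F K x + phi F K y) ∧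
    (∀ (r : F) x, phi F K (r • x) = r • phi F K x) ∧
    (∀ x y, phi F K (mulC F K x y) = mulR F K (phi F K x) (phi F K y)) ∧
    (∀ x, phi F K (deltaC F K x) = dR F K (phi F K x)) ∧
    (∀ a : BC (V := V) K,
      phi F K (Finsupp.single a 1) =
        Finsupp.single
          (⟨(a.1.2, a.1.1 \ a.1.2), a.2.2, Finset.disjoint_sdiff⟩ : BR K) 1) ∧
    (∀ a : BC (V := V) K,
      2 * a.1.2.card + (a.1.1 \ a.1.2).card = a.1.1.card + a.1.2.card) := by
  refine ⟨phi_bijective F K, fun _ _ => Finsupp.mapDomain_add,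
    fun _ _ => Finsupp.mapDomain_smul _ _, phi_mulC F K, phi_deltaC F K, fun a => ?_, fun a => ?_⟩
  · rw [phi_eq_mapDomain, Finsupp.mapDomain_single]
    congr 1
    -- the two sides compute `a.1.1 \ a.1.2` with different `DecidableEq V` instances
    exact Subtype.ext (by rw [BC.equivBR_apply_coe]; congr!)
  · have hcard := Finset.card_sdiff_add_card_eq_card a.2.1
    omega
end

section
/- Let K be an ordered simplicial complex, V(K) = I_0 ⊔ I_1 a partition into nonempty sets, and let a, b ∈ C̃*(K; F) be cocycles. Then μ_0^*(a ⋆ b) = δ(P(J)^*(a ⋆ b)) in C̃*(K; F), where μ_0 = (j_{I_0} ⋆ j_{I_1}) ∘ ι_{I_0,I_1} : K → K ⋆ K and P(J) is the prism operator of the simplicial homotopy H_J : K ⊗ Δ^1 → K ⋆ K between the inclusion K ⊆ K ⋆ K (first factor) and μ_0. In particular, the class of μ_0^*(a ⋆ b) is zero in H̃*(K; F). -/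
variable {V : Type*} [Fintype V] [LinearOrder V] (F : Type*) [Field F]

/-- Reduced cochains of `K` with coefficients in `F`, as finitely supported functions
on simplices (identified with their Kronecker duals); the simplicial coboundary. -/
noncomputable def cobdry (K : Finset (Finset V)) (c : Finset V →₀ F) :
    Finset V →₀ F :=
  c.sum fun σ r => ∑ v : V,
    if v ∉ σ ∧ insert v σ ∈ K then
      (r * (-1 : F) ^ ((σ.filter (· < v)).card)) • Finsupp.single (insert v σ) 1
    else 0

/-- The join cochain product `⋆ : C̃^p(K) ⊗ C̃^q(K) → C̃^{p+q+1}(K ⋆ K)`,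
`(a ⋆ b)(σ ⊔ τ) = a(σ) b(τ)`; a simplex of `K ⋆ K` is encoded as the pair `(σ, τ)`. -/
noncomputable def starC (a b : Finset V →₀ F) : (Finset V × Finset V) →₀ F :=
  a.sum fun σ r => b.sum fun τ t => Finsupp.single (σ, τ) (r * t)

/-- The pullback `μ_0^*` along `μ_0 = (j_{I_0} ⋆ j_{I_1}) ∘ ι_{I_0,I_1} : K → K ⋆ K`,
`σ ↦ (σ ∩ I_0) ⊔ (σ ∩ I_1)` (where `I_1 = I_0ᶜ`), including the orientation sign of
the reordering of the vertices of `σ`. -/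
noncomputable def mu0star (K : Finset (Finset V)) (I₀ : Finset V)
    (c : (Finset V × Finset V) →₀ F) : Finset V →₀ F :=
  c.sum fun st r =>
    if st.1 ⊆ I₀ ∧ st.2 ⊆ I₀ᶜ ∧ st.1 ∪ st.2 ∈ K then
      ((-1 : F) ^ (((st.2 ×ˢ st.1).filter fun xy => xy.1 < xy.2).card)) •
        Finsupp.single (st.1 ∪ st.2) r
    else 0

/-- The chain-level prism operator `P(J) : C_p(K) → C_{p+1}(K ⋆ K)` of the simplicial
homotopy `H_J : K ⊗ Δ^1 → K ⋆ K` between the first-factor inclusion and `μ_0`,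
`P(J)(ρ) = Σ_{s ∈ S(p,1)} sgn(s) (H_J)_*(ρ ⊙ s)`, evaluated on a simplex `ρ`
(degenerate images vanish; each summand carries the orientation sign). -/
noncomputable def prismJ (I₀ : Finset V) (ρ : Finset V) :
    (Finset V × Finset V) →₀ F :=
  ∑ v ∈ ρ,
    if v ∈ I₀ then 0
    else
      ((-1 : F) ^ ((ρ.filter (· < v)).card) *
        (-1 : F) ^
          ((((ρ.filter (v ≤ ·)) \ I₀) ×ˢ ((ρ.filter (v ≤ ·)) ∩ I₀)).filter
              (fun xy => xy.1 < xy.2)).card) •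
        Finsupp.single
          (ρ.filter (· ≤ v) ∪ (ρ.filter (v ≤ ·) ∩ I₀), ρ.filter (v ≤ ·) \ I₀) 1

/-- The dual `P(J)^*` on cochains, `(P(J)^* c)(ρ) = c(P(J)(ρ))`. -/
noncomputable def prismJdual (K : Finset (Finset V)) (I₀ : Finset V)
    (c : (Finset V × Finset V) →₀ F) : Finset V →₀ F :=
  ∑ ρ ∈ K, ((prismJ F I₀ ρ).sum fun x r => c x * r) • Finsupp.single ρ 1


namespace MuAux

variable {V : Type*} [LinearOrder V]

/-- number of inversions between `s` and `t` -/
def inv (s t : Finset V) : ℕ := ((s ×ˢ t).filter fun xy => xy.1 < xy.2).card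

lemma inv_eq_sum (s t : Finset V) : inv s t = ∑ y ∈ t, (s.filter (· < y)).card := by
  classical
  rw [inv, Finset.card_filter, Finset.sum_product]
  rw [Finset.sum_comm]
  refine Finset.sum_congr rfl fun y _ => ?_
  rw [Finset.card_filter]

lemma inv_union_right {t t' : Finset V} (s : Finset V) (h : Disjoint t t') :
    inv s (t ∪ t') = inv s t + inv s t' := by
  classical
  simp only [inv_eq_sum]
  exact Finset.sum_union h

lemma inv_union_left {s s' : Finset V} (t : Finset V) (h : Disjoint s s') :
    inv (s ∪ s') t = inv s t + inv s' t := by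
  classical
  simp only [inv_eq_sum, ← Finset.sum_add_distrib]
  refine Finset.sum_congr rfl fun y _ => ?_
  rw [Finset.filter_union]
  exact Finset.card_union_of_disjoint (Finset.disjoint_filter_filter h)

lemma inv_singleton_left (w : V) (t : Finset V) :
    inv {w} t = (t.filter (w < ·)).card := by
  classical
  rw [inv_eq_sum, Finset.card_filter]
  refine Finset.sum_congr rfl fun y _ => ?_
  rw [Finset.filter_singleton]
  by_cases h : w < y <;> simp [h]

lemma inv_eq_zero {s t : Finset V} (h : ∀ x ∈ s, ∀ y ∈ t, ¬ x < y) :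
    inv s t = 0 := by
  classical
  rw [inv, Finset.card_eq_zero, Finset.filter_eq_empty_iff]
  rintro ⟨x, y⟩ hxy
  rw [Finset.mem_product] at hxy
  exact h x hxy.1 y hxy.2

lemma inv_erase_right {t : Finset V} (s : Finset V) {v : V} (hv : v ∈ t) :
    inv s t = inv s (t.erase v) + (s.filter (· < v)).card := by
  classical
  simp only [inv_eq_sum]
  rw [← Finset.sum_erase_add _ _ hv]

lemma inv_erase_left {s : Finset V} (t : Finset V) {v : V} (hv : v ∈ s) :
    inv s t = inv (s.erase v) t + (t.filter (v < ·)).card := by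
  classical
  simp only [inv_eq_sum]
  rw [Finset.card_filter, ← Finset.sum_add_distrib]
  refine Finset.sum_congr rfl fun y _ => ?_
  by_cases h : v < y
  · have hv' : v ∈ s.filter (· < y) := Finset.mem_filter.2 ⟨hv, h⟩
    rw [Finset.filter_erase, if_pos h, ← Finset.card_erase_add_one hv']
  · rw [Finset.filter_erase, if_neg h, Finset.erase_eq_of_notMem, add_zero]
    simp only [Finset.mem_filter]
    tauto

variable {F : Type*} [Field F]

lemma neg_one_parity (m n : ℕ) (h : m % 2 = n % 2) : ((-1 : F)) ^ m = (-1) ^ n := by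
  rw [neg_one_pow_eq_pow_mod_two, h, ← neg_one_pow_eq_pow_mod_two]

lemma sign_helper_neg (a b c d e f : ℕ) (h : (a + b + c) % 2 = (d + e + f + 1) % 2) :
    ((-1 : F)) ^ a * (-1) ^ b * (-1) ^ c = -((-1) ^ d * (-1) ^ e * (-1) ^ f) := by
  have : ((-1 : F)) ^ (a + b + c) = (-1) ^ (d + e + f + 1) := neg_one_parity _ _ h
  rw [pow_add, pow_add, pow_add, pow_add, pow_add] at this
  rw [pow_one] at this
  linear_combination this

lemma sign_helper_pos (a b c d : ℕ) (h : (a + b + c) % 2 = d % 2) :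
    ((-1 : F)) ^ a * (-1) ^ b * (-1) ^ c = (-1) ^ d := by
  have : ((-1 : F)) ^ (a + b + c) = (-1) ^ d := neg_one_parity _ _ h
  rw [pow_add, pow_add] at this
  linear_combination this

def sigw (I₀ ρ : Finset V) (w : V) : Finset V :=
  ρ.filter (· ≤ w) ∪ (ρ.filter (w ≤ ·) ∩ I₀)

def tauw (I₀ ρ : Finset V) (w : V) : Finset V := ρ.filter (w ≤ ·) \ I₀

def GI (I₀ ρ : Finset V) (w : V) : Finset V := ρ.filter (w ≤ ·) ∩ I₀

variable {I₀ π ρ : Finset V} {v w w' : V}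

lemma mem_sigw {x : V} : x ∈ sigw I₀ ρ w ↔ x ∈ ρ ∧ (x ≤ w ∨ x ∈ I₀) := by
  simp only [sigw, Finset.mem_union, Finset.mem_inter, Finset.mem_filter]
  rcases le_total x w with h | h <;> tauto

lemma mem_tauw {x : V} : x ∈ tauw I₀ ρ w ↔ x ∈ ρ ∧ w ≤ x ∧ x ∉ I₀ := by
  simp only [tauw, Finset.mem_sdiff, Finset.mem_filter]; tauto

lemma mem_GI {x : V} : x ∈ GI I₀ ρ w ↔ x ∈ ρ ∧ w ≤ x ∧ x ∈ I₀ := by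
  simp only [GI, Finset.mem_inter, Finset.mem_filter]; tauto

lemma sigw_subset : sigw I₀ ρ w ⊆ ρ := fun x hx => (mem_sigw.1 hx).1
lemma tauw_subset : tauw I₀ ρ w ⊆ ρ := fun x hx => (mem_tauw.1 hx).1

lemma sigw_erase : sigw I₀ (π.erase v) w = (sigw I₀ π w).erase v := by
  ext x
  simp only [mem_sigw, Finset.mem_erase]
  tauto

lemma tauw_erase : tauw I₀ (π.erase v) w = (tauw I₀ π w).erase v := by
  ext x
  simp only [mem_tauw, Finset.mem_erase]
  tauto

lemma GI_erase : GI I₀ (π.erase v) w = (GI I₀ π w).erase v := by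
  ext x
  simp only [mem_GI, Finset.mem_erase]
  tauto

lemma not_mem_tauw (h : v < w ∨ v ∈ I₀) : v ∉ tauw I₀ π w := by
  rw [mem_tauw]
  rcases h with h | h
  · rintro ⟨-, h2, -⟩; exact absurd h (not_lt.2 h2)
  · tauto

lemma not_mem_sigw (h : w < v) (h2 : v ∉ I₀) : v ∉ sigw I₀ π w := by
  rw [mem_sigw]
  rintro ⟨-, h3 | h3⟩
  · exact absurd h (not_lt.2 h3)
  · exact h2 h3

lemma not_mem_GI (h : v ∉ I₀) : v ∉ GI I₀ π w := by rw [mem_GI]; tauto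

lemma mem_sigw_self (hw : w ∈ π) : w ∈ sigw I₀ π w := mem_sigw.2 ⟨hw, Or.inl le_rfl⟩
lemma mem_tauw_self (hw : w ∈ π) (h : w ∉ I₀) : w ∈ tauw I₀ π w :=
  mem_tauw.2 ⟨hw, le_rfl, h⟩

lemma part_sig (hw : w ∈ π) :
    (π.erase w).filter (fun v => v < w ∨ v ∈ I₀) = (sigw I₀ π w).erase w := by
  ext x
  simp only [Finset.mem_filter, Finset.mem_erase, mem_sigw]
  constructor
  · rintro ⟨⟨hne, hx⟩, h | h⟩
    · exact ⟨hne, hx, Or.inl h.le⟩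
    · exact ⟨hne, hx, Or.inr h⟩
  · rintro ⟨hne, hx, h | h⟩
    · exact ⟨⟨hne, hx⟩, Or.inl (lt_of_le_of_ne h hne)⟩
    · exact ⟨⟨hne, hx⟩, Or.inr h⟩

lemma part_tau (hw : w ∈ π) :
    (π.erase w).filter (fun v => ¬(v < w ∨ v ∈ I₀)) = (tauw I₀ π w).erase w := by
  ext x
  simp only [Finset.mem_filter, Finset.mem_erase, mem_tauw, not_or, not_lt]
  tauto

/-- faces at the minimum of `D` -/
lemma sigw_min_erase (hw : w ∈ π) (h0 : w ∉ I₀) (hmin : ∀ x ∈ π, x ∉ I₀ → w ≤ x) :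
    (sigw I₀ π w).erase w = π ∩ I₀ := by
  ext x
  simp only [Finset.mem_erase, mem_sigw, Finset.mem_inter]
  constructor
  · rintro ⟨hne, hx, h | h⟩
    · by_cases hI : x ∈ I₀
      · exact ⟨hx, hI⟩
      · exact absurd (le_antisymm h (hmin x hx hI)) hne
    · exact ⟨hx, h⟩
  · rintro ⟨hx, hI⟩
    exact ⟨fun he => h0 (he ▸ hI), hx, Or.inr hI⟩

lemma tauw_min (hw : w ∈ π) (hmin : ∀ x ∈ π, x ∉ I₀ → w ≤ x) :
    tauw I₀ π w = π \ I₀ := by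
  ext x
  simp only [mem_tauw, Finset.mem_sdiff]
  exact ⟨fun h => ⟨h.1, h.2.2⟩, fun h => ⟨h.1, hmin x h.1 h.2, h.2⟩⟩

/-- faces at the maximum of `D` -/
lemma sigw_max (hmax : ∀ x ∈ π, x ∉ I₀ → x ≤ w) : sigw I₀ π w = π := by
  ext x
  simp only [mem_sigw]
  refine ⟨fun h => h.1, fun h => ⟨h, ?_⟩⟩
  by_cases hI : x ∈ I₀
  · exact Or.inr hI
  · exact Or.inl (hmax x h hI)

lemma tauw_max_erase (hmax : ∀ x ∈ π, x ∉ I₀ → x ≤ w) : (tauw I₀ π w).erase w = ∅ := by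
  rw [Finset.eq_empty_iff_forall_notMem]
  intro x hx
  rw [Finset.mem_erase, mem_tauw] at hx
  exact hx.1 (le_antisymm (hmax x hx.2.1 hx.2.2.2) hx.2.2.1)

/-- adjacent faces -/
lemma sigw_adj (hw' : w' ∉ I₀) (hlt : w < w')
    (hadj : ∀ x ∈ π, x ∉ I₀ → ¬(w < x ∧ x < w')) :
    sigw I₀ π w = (sigw I₀ π w').erase w' := by
  ext x
  simp only [mem_sigw, Finset.mem_erase]
  constructor
  · rintro ⟨hx, h | h⟩
    · exact ⟨fun he => absurd (he ▸ h) (not_le.2 hlt), hx, Or.inl (h.trans hlt.le)⟩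
    · exact ⟨fun he => hw' (he ▸ h), hx, Or.inr h⟩
  · rintro ⟨hne, hx, h | h⟩
    · by_cases hI : x ∈ I₀
      · exact ⟨hx, Or.inr hI⟩
      · have := hadj x hx hI
        refine ⟨hx, Or.inl ?_⟩
        rcases le_or_gt x w with h2 | h2
        · exact h2
        · exact absurd ⟨h2, lt_of_le_of_ne h hne⟩ this
    · exact ⟨hx, Or.inr h⟩

lemma tauw_adj (hw' : w' ∈ π → True) (hlt : w < w')
    (hadj : ∀ x ∈ π, x ∉ I₀ → ¬(w < x ∧ x < w')) :
    (tauw I₀ π w).erase w = tauw I₀ π w' := by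
  ext x
  simp only [Finset.mem_erase, mem_tauw]
  constructor
  · rintro ⟨hne, hx, hle, hI⟩
    refine ⟨hx, ?_, hI⟩
    rcases le_or_gt w' x with h2 | h2
    · exact h2
    · exact absurd ⟨lt_of_le_of_ne hle (Ne.symm hne), h2⟩ (hadj x hx hI)
  · rintro ⟨hx, hle, hI⟩
    exact ⟨fun he => absurd (he ▸ hle) (not_le.2 hlt), hx, hlt.le.trans hle, hI⟩

lemma erase_filter_lt (s : Finset V) (v : V) :
    (s.erase v).filter (· < v) = s.filter (· < v) := by
  rw [Finset.filter_erase, Finset.erase_eq_of_notMem]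
  simp

def SG (F : Type*) [Field F] {V : Type*} [LinearOrder V] (I₀ ρ : Finset V) (w : V) : F :=
  (-1) ^ ((ρ.filter (· < w)).card) * (-1) ^ (inv (tauw I₀ ρ w) (GI I₀ ρ w))

lemma neg_pow_eq_neg (m n : ℕ) (h : m % 2 = (n + 1) % 2) :
    ((-1 : F)) ^ m = -(-1) ^ n := by
  rw [neg_one_parity (F := F) m (n+1) h, pow_succ]; ring

lemma not_mem_GI' (h : v < w) : v ∉ GI I₀ π w := by
  rw [mem_GI]; rintro ⟨-, h2, -⟩; exact absurd h (not_lt.2 h2)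

lemma card_filter_le (hw : w ∈ π) :
    (π.filter (· ≤ w)).card = (π.filter (· < w)).card + 1 := by
  have h : π.filter (· ≤ w) = insert w (π.filter (· < w)) := by
    ext x
    simp only [Finset.mem_filter, Finset.mem_insert]
    constructor
    · rintro ⟨h1, h2⟩
      rcases eq_or_lt_of_le h2 with h3 | h3
      · exact Or.inl h3
      · exact Or.inr ⟨h1, h3⟩
    · rintro (rfl | ⟨h1, h2⟩)
      · exact ⟨hw, le_rfl⟩
      · exact ⟨h1, h2.le⟩
  rw [h, Finset.card_insert_of_notMem (by simp)]

lemma filter_lt_decomp (hwv : w < v) :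
    (π.filter (· < v)).card = (π.filter (· < w)).card +
      (((GI I₀ π w).filter (· < v)).card + ((tauw I₀ π w).filter (· < v)).card) := by
  classical
  have h : π.filter (· < v) =
      π.filter (· < w) ∪ ((GI I₀ π w).filter (· < v) ∪ (tauw I₀ π w).filter (· < v)) := by
    ext x
    simp only [Finset.mem_filter, Finset.mem_union, mem_GI, mem_tauw]
    constructor
    · rintro ⟨h1, h2⟩
      rcases lt_or_ge x w with h3 | h3
      · exact Or.inl ⟨h1, h3⟩
      · by_cases hI : x ∈ I₀
        · exact Or.inr (Or.inl ⟨⟨h1, h3, hI⟩, h2⟩)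
        · exact Or.inr (Or.inr ⟨⟨h1, h3, hI⟩, h2⟩)
    · rintro (⟨h1, h2⟩ | ⟨⟨h1, -, -⟩, h2⟩ | ⟨⟨h1, -, -⟩, h2⟩)
      · exact ⟨h1, h2.trans hwv⟩
      · exact ⟨h1, h2⟩
      · exact ⟨h1, h2⟩
  have d1 : Disjoint (π.filter (· < w))
      ((GI I₀ π w).filter (· < v) ∪ (tauw I₀ π w).filter (· < v)) := by
    rw [Finset.disjoint_left]
    intro x hx hx'
    simp only [Finset.mem_filter, Finset.mem_union, mem_GI, mem_tauw] at hx hx'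
    rcases hx' with ⟨⟨-, h3, -⟩, -⟩ | ⟨⟨-, h3, -⟩, -⟩ <;> exact absurd hx.2 (not_lt.2 h3)
  have d2 : Disjoint ((GI I₀ π w).filter (· < v)) ((tauw I₀ π w).filter (· < v)) := by
    rw [Finset.disjoint_left]
    intro x hx hx'
    simp only [Finset.mem_filter, mem_GI, mem_tauw] at hx hx'
    exact hx'.1.2.2 hx.1.2.2
  rw [h, Finset.card_union_of_disjoint d1, Finset.card_union_of_disjoint d2]

lemma sigw_card (hw : w ∈ π) (h0 : w ∉ I₀) :
    (sigw I₀ π w).card = ((π.filter (· < w)).card + 1) + (GI I₀ π w).card := by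
  classical
  have d : Disjoint (π.filter (· ≤ w)) (GI I₀ π w) := by
    rw [Finset.disjoint_left]
    intro x hx hx'
    simp only [Finset.mem_filter] at hx
    rw [mem_GI] at hx'
    exact h0 (le_antisymm hx.2 hx'.2.1 ▸ hx'.2.2)
  rw [show sigw I₀ π w = π.filter (· ≤ w) ∪ GI I₀ π w from rfl,
    Finset.card_union_of_disjoint d, card_filter_le hw]

lemma GI_card_split (hv0 : v ∉ I₀) :
    (GI I₀ π w).card =
      ((GI I₀ π w).filter (· < v)).card + ((GI I₀ π w).filter (v < ·)).card := by
  classical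
  rw [← Finset.card_filter_add_card_filter_not (s := GI I₀ π w) (· < v)]
  congr 2
  ext x
  simp only [Finset.mem_filter, mem_GI, not_lt]
  constructor
  · rintro ⟨h1, h2⟩
    refine ⟨h1, lt_of_le_of_ne h2 ?_⟩
    rintro rfl
    exact hv0 h1.2.2
  · rintro ⟨h1, h2⟩
    exact ⟨h1, h2.le⟩

lemma sigw_erase_filter_lt :
    ((sigw I₀ π w).erase w).filter (· < w) = π.filter (· < w) := by
  ext x
  simp only [Finset.mem_filter, Finset.mem_erase, mem_sigw]
  constructor
  · rintro ⟨⟨-, h1, -⟩, h2⟩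
    exact ⟨h1, h2⟩
  · rintro ⟨h1, h2⟩
    exact ⟨⟨h2.ne, h1, Or.inl h2.le⟩, h2⟩

lemma signC1sig (hw : w ∈ π) (h0 : w ∉ I₀) (hv : v ∈ π) (hne : v ≠ w)
    (hcase : v < w ∨ v ∈ I₀) :
    SG F I₀ (π.erase v) w * (-1) ^ (((π.erase v).filter (· < v)).card)
      = -(SG F I₀ π w * (-1) ^ ((((sigw I₀ π w).erase v).filter (· < v)).card)) := by
  classical
  rw [SG, SG, erase_filter_lt]
  by_cases hlt : v < w
  · have e1 : ((π.erase v).filter (· < w)).card + 1 = (π.filter (· < w)).card := by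
      rw [Finset.filter_erase]
      exact Finset.card_erase_add_one (Finset.mem_filter.2 ⟨hv, hlt⟩)
    have e2 : tauw I₀ (π.erase v) w = tauw I₀ π w := by
      rw [tauw_erase, Finset.erase_eq_of_notMem (not_mem_tauw (Or.inl hlt))]
    have e3 : GI I₀ (π.erase v) w = GI I₀ π w := by
      rw [GI_erase, Finset.erase_eq_of_notMem (not_mem_GI' hlt)]
    have e4 : ((sigw I₀ π w).erase v).filter (· < v) = π.filter (· < v) := by
      ext x
      simp only [Finset.mem_filter, Finset.mem_erase, mem_sigw]
      constructor
      · rintro ⟨⟨-, h1, -⟩, h2⟩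
        exact ⟨h1, h2⟩
      · rintro ⟨h1, h2⟩
        exact ⟨⟨h2.ne, h1, Or.inl (h2.le.trans hlt.le)⟩, h2⟩
    rw [e2, e3, e4, ← pow_add, ← pow_add, ← pow_add, ← pow_add]
    refine neg_pow_eq_neg _ _ ?_
    omega
  · have hwv : w < v := lt_of_le_of_ne (not_lt.1 hlt) (Ne.symm hne)
    have hI : v ∈ I₀ := hcase.resolve_left hlt
    have e1 : (π.erase v).filter (· < w) = π.filter (· < w) := by
      rw [Finset.filter_erase, Finset.erase_eq_of_notMem]
      simp only [Finset.mem_filter, not_and, not_lt]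
      exact fun _ => hwv.le
    have e2 : tauw I₀ (π.erase v) w = tauw I₀ π w := by
      rw [tauw_erase, Finset.erase_eq_of_notMem (not_mem_tauw (Or.inr hI))]
    have e3 : GI I₀ (π.erase v) w = (GI I₀ π w).erase v := GI_erase
    have e4 : inv (tauw I₀ π w) (GI I₀ π w) =
        inv (tauw I₀ π w) ((GI I₀ π w).erase v) + ((tauw I₀ π w).filter (· < v)).card :=
      inv_erase_right _ (mem_GI.2 ⟨hv, hwv.le, hI⟩)
    have e5 := filter_lt_decomp (I₀ := I₀) (π := π) hwv
    have e6 : ((sigw I₀ π w).erase v).filter (· < v) =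
        π.filter (· ≤ w) ∪ (GI I₀ π w).filter (· < v) := by
      ext x
      simp only [Finset.mem_filter, Finset.mem_erase, Finset.mem_union, mem_sigw, mem_GI]
      constructor
      · rintro ⟨⟨hne2, h1, h3 | h3⟩, h2⟩
        · exact Or.inl ⟨h1, h3⟩
        · rcases le_or_gt x w with h4 | h4
          · exact Or.inl ⟨h1, h4⟩
          · exact Or.inr ⟨⟨h1, h4.le, h3⟩, h2⟩
      · rintro (⟨h1, h2⟩ | ⟨⟨h1, h2, h3⟩, h4⟩)
        · have hx : x < v := lt_of_le_of_lt h2 hwv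
          exact ⟨⟨hx.ne, h1, Or.inl h2⟩, hx⟩
        · exact ⟨⟨h4.ne, h1, Or.inr h3⟩, h4⟩
    have e7 : (π.filter (· ≤ w) ∪ (GI I₀ π w).filter (· < v)).card =
        ((π.filter (· < w)).card + 1) + ((GI I₀ π w).filter (· < v)).card := by
      have d : Disjoint (π.filter (· ≤ w)) ((GI I₀ π w).filter (· < v)) := by
        rw [Finset.disjoint_left]
        intro x hx hx'
        simp only [Finset.mem_filter, mem_GI] at hx hx'
        exact h0 (le_antisymm hx.2 hx'.1.2.1 ▸ hx'.1.2.2)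
      rw [Finset.card_union_of_disjoint d, card_filter_le hw]
    rw [e1, e2, e3, e4, e6, e7, ← pow_add, ← pow_add, ← pow_add, ← pow_add]
    refine neg_pow_eq_neg _ _ ?_
    omega

lemma signC1tau (hw : w ∈ π) (h0 : w ∉ I₀) (hv : v ∈ π) (hwv : w < v) (hv0 : v ∉ I₀) :
    SG F I₀ (π.erase v) w * (-1) ^ (((π.erase v).filter (· < v)).card)
      = -(SG F I₀ π w * ((-1) ^ ((sigw I₀ π w).card) *
          (-1) ^ ((((tauw I₀ π w).erase v).filter (· < v)).card))) := by
  classical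
  rw [SG, SG, erase_filter_lt, erase_filter_lt]
  have e1 : (π.erase v).filter (· < w) = π.filter (· < w) := by
    rw [Finset.filter_erase, Finset.erase_eq_of_notMem]
    simp only [Finset.mem_filter, not_and, not_lt]
    exact fun _ => hwv.le
  have e2 : tauw I₀ (π.erase v) w = (tauw I₀ π w).erase v := tauw_erase
  have e3 : GI I₀ (π.erase v) w = GI I₀ π w := by
    rw [GI_erase, Finset.erase_eq_of_notMem (not_mem_GI hv0)]
  have e4 : inv (tauw I₀ π w) (GI I₀ π w) =
      inv ((tauw I₀ π w).erase v) (GI I₀ π w) + ((GI I₀ π w).filter (v < ·)).card :=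
    inv_erase_left _ (mem_tauw.2 ⟨hv, hwv.le, hv0⟩)
  have e5 := filter_lt_decomp (I₀ := I₀) (π := π) hwv
  have e6 := sigw_card (I₀ := I₀) hw h0
  have e7 := GI_card_split (π := π) (w := w) hv0
  rw [e1, e2, e3, e4, ← pow_add, ← pow_add, ← pow_add, ← pow_add, ← pow_add]
  refine neg_pow_eq_neg _ _ ?_
  omega

lemma signC2 (hw : w ∈ π) (h0 : w ∉ I₀) (hw' : w' ∈ π) (h0' : w' ∉ I₀) (hlt : w < w')
    (hadj : ∀ x ∈ π, x ∉ I₀ → ¬(w < x ∧ x < w')) :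
    SG F I₀ π w * ((-1) ^ ((sigw I₀ π w).card) *
        (-1) ^ ((((tauw I₀ π w).erase w).filter (· < w)).card))
      = -(SG F I₀ π w' * (-1) ^ ((((sigw I₀ π w').erase w').filter (· < w')).card)) := by
  classical
  have p1 : ((tauw I₀ π w).erase w).filter (· < w) = ∅ := by
    rw [Finset.eq_empty_iff_forall_notMem]
    intro x hx
    simp only [Finset.mem_filter, Finset.mem_erase, mem_tauw] at hx
    exact absurd hx.2 (not_lt.2 hx.1.2.2.1)
  have p4 : GI I₀ π w = GI I₀ π w' ∪ π.filter (fun x => w < x ∧ x < w') := by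
    ext x
    simp only [mem_GI, Finset.mem_union, Finset.mem_filter]
    constructor
    · rintro ⟨h1, h2, h3⟩
      have hxw : w < x := lt_of_le_of_ne h2 (by rintro rfl; exact h0 h3)
      rcases lt_or_ge x w' with h4 | h4
      · exact Or.inr ⟨h1, hxw, h4⟩
      · exact Or.inl ⟨h1, h4, h3⟩
    · rintro (⟨h1, h2, h3⟩ | ⟨h1, h2, h3⟩)
      · exact ⟨h1, hlt.le.trans h2, h3⟩
      · refine ⟨h1, h2.le, ?_⟩
        by_contra hI
        exact hadj x h1 hI ⟨h2, h3⟩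
  have p4d : Disjoint (GI I₀ π w') (π.filter (fun x => w < x ∧ x < w')) := by
    rw [Finset.disjoint_left]
    intro x hx hx'
    rw [mem_GI] at hx
    simp only [Finset.mem_filter] at hx'
    exact absurd hx'.2.2 (not_lt.2 hx.2.1)
  have p4c : (GI I₀ π w).card =
      (GI I₀ π w').card + (π.filter (fun x => w < x ∧ x < w')).card := by
    rw [p4, Finset.card_union_of_disjoint p4d]
  have p5 : tauw I₀ π w = tauw I₀ π w' ∪ {w} := by
    ext x
    simp only [mem_tauw, Finset.mem_union, Finset.mem_singleton]
    constructor
    · rintro ⟨h1, h2, h3⟩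
      rcases eq_or_lt_of_le h2 with h4 | h4
      · exact Or.inr h4.symm
      · rcases lt_or_ge x w' with h5 | h5
        · exact absurd ⟨h4, h5⟩ (hadj x h1 h3)
        · exact Or.inl ⟨h1, h5, h3⟩
    · rintro (⟨h1, h2, h3⟩ | rfl)
      · exact ⟨h1, hlt.le.trans h2, h3⟩
      · exact ⟨hw, le_rfl, h0⟩
  have p5d : Disjoint (tauw I₀ π w') ({w} : Finset V) := by
    rw [Finset.disjoint_left]
    intro x hx hx'
    rw [mem_tauw] at hx
    rw [Finset.mem_singleton] at hx'
    subst hx'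
    exact absurd hlt (not_lt.2 hx.2.1)
  have p6 : inv (tauw I₀ π w) (GI I₀ π w) =
      inv (tauw I₀ π w') (GI I₀ π w') +
        ((GI I₀ π w').card + (π.filter (fun x => w < x ∧ x < w')).card) := by
    rw [p5, p4, inv_union_left _ p5d, inv_union_right _ p4d, inv_union_right _ p4d]
    have z1 : inv (tauw I₀ π w') (π.filter (fun x => w < x ∧ x < w')) = 0 := by
      refine inv_eq_zero fun x hx y hy => ?_
      rw [mem_tauw] at hx
      simp only [Finset.mem_filter] at hy
      exact not_lt.2 (hy.2.2.le.trans hx.2.1)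
    have z2 : inv ({w} : Finset V) (GI I₀ π w') = (GI I₀ π w').card := by
      rw [inv_singleton_left, Finset.filter_true_of_mem]
      intro x hx
      rw [mem_GI] at hx
      exact hlt.trans_le hx.2.1
    have z3 : inv ({w} : Finset V) (π.filter (fun x => w < x ∧ x < w')) =
        (π.filter (fun x => w < x ∧ x < w')).card := by
      rw [inv_singleton_left, Finset.filter_true_of_mem]
      intro x hx
      simp only [Finset.mem_filter] at hx
      exact hx.2.1
    rw [z1, z2, z3]
    ring
  have p2 : ((sigw I₀ π w').erase w').filter (· < w') = π.filter (· < w') :=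
    sigw_erase_filter_lt
  have p3 := sigw_card (I₀ := I₀) hw h0
  rw [SG, SG, p1, Finset.card_empty, pow_zero, mul_one, p2,
    ← pow_add, ← pow_add, ← pow_add, ← pow_add]
  refine neg_pow_eq_neg _ _ ?_
  omega

lemma signC3 (hw : w ∈ π) (h0 : w ∉ I₀) (hmin : ∀ x ∈ π, x ∉ I₀ → w ≤ x) :
    SG F I₀ π w * (-1) ^ ((((sigw I₀ π w).erase w).filter (· < w)).card)
      = (-1) ^ (inv (π \ I₀) (π ∩ I₀)) := by
  classical
  have q2 : tauw I₀ π w = π \ I₀ := tauw_min hw hmin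
  have q3 : π ∩ I₀ = GI I₀ π w ∪ (π ∩ I₀).filter (· < w) := by
    ext x
    simp only [Finset.mem_inter, Finset.mem_union, Finset.mem_filter, mem_GI]
    constructor
    · rintro ⟨h1, h2⟩
      rcases le_or_gt w x with h3 | h3
      · exact Or.inl ⟨h1, h3, h2⟩
      · exact Or.inr ⟨⟨h1, h2⟩, h3⟩
    · rintro (⟨h1, -, h2⟩ | ⟨⟨h1, h2⟩, -⟩) <;> exact ⟨h1, h2⟩
  have q3d : Disjoint (GI I₀ π w) ((π ∩ I₀).filter (· < w)) := by
    rw [Finset.disjoint_left]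
    intro x hx hx'
    rw [mem_GI] at hx
    simp only [Finset.mem_filter] at hx'
    exact absurd hx'.2 (not_lt.2 hx.2.1)
  have q4 : inv (π \ I₀) (π ∩ I₀) = inv (π \ I₀) (GI I₀ π w) := by
    rw [q3, inv_union_right _ q3d]
    have : inv (π \ I₀) ((π ∩ I₀).filter (· < w)) = 0 := by
      refine inv_eq_zero fun x hx y hy => ?_
      rw [Finset.mem_sdiff] at hx
      simp only [Finset.mem_filter] at hy
      exact not_lt.2 (hy.2.le.trans (hmin x hx.1 hx.2))
    rw [this, add_zero]
  rw [SG, sigw_erase_filter_lt, q2, q4, ← pow_add, ← pow_add]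
  refine neg_one_parity _ _ ?_
  omega

lemma telescope {α : Type*} [LinearOrder α] (D : Finset α) (f g : α → F) :
    ∀ (hne : D.Nonempty),
      (∀ w ∈ D, ∀ w' ∈ D, w < w' → (∀ x ∈ D, ¬(w < x ∧ x < w')) → g w + f w' = 0) →
      ∑ w ∈ D, (f w + g w) = f (D.min' hne) + g (D.max' hne) := by
  classical
  induction D using Finset.strongInduction with
  | _ D ih =>
    intro hne hc
    have hmD : D.min' hne ∈ D := D.min'_mem hne
    set m := D.min' hne with hm
    by_cases h1 : D.erase m = ∅
    · have hall : ∀ x ∈ D, x = m := by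
        intro x hx
        by_contra hne2
        exact absurd (Finset.mem_erase.2 ⟨hne2, hx⟩) (by simp [h1])
      have hmax : D.max' hne = m := hall _ (D.max'_mem hne)
      have hD : D = {m} := Finset.eq_singleton_iff_unique_mem.2 ⟨hmD, hall⟩
      rw [hmax, hD, Finset.sum_singleton]
    · have hne' : (D.erase m).Nonempty := Finset.nonempty_iff_ne_empty.2 h1
      have hsub : D.erase m ⊂ D := Finset.erase_ssubset hmD
      have hc' : ∀ w ∈ D.erase m, ∀ w' ∈ D.erase m, w < w' →
          (∀ x ∈ D.erase m, ¬(w < x ∧ x < w')) → g w + f w' = 0 := by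
        intro w hw w' hw' hlt hadj
        refine hc w (Finset.mem_of_mem_erase hw) w' (Finset.mem_of_mem_erase hw') hlt ?_
        intro x hx hbet
        by_cases hxm : x = m
        · subst hxm
          exact absurd (D.min'_le w (Finset.mem_of_mem_erase hw)) (not_le.2 hbet.1)
        · exact hadj x (Finset.mem_erase.2 ⟨hxm, hx⟩) hbet
      have key := ih (D.erase m) hsub hne' hc'
      have hy : (D.erase m).min' hne' ∈ D := Finset.mem_of_mem_erase ((D.erase m).min'_mem hne')
      have hmlt : m < (D.erase m).min' hne' := by
        have h2 := D.min'_le _ hy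
        rcases eq_or_lt_of_le h2 with h3 | h3
        · exact absurd (h3 ▸ (D.erase m).min'_mem hne') (fun hmem =>
            (Finset.mem_erase.1 hmem).1 rfl)
        · exact h3
      have hcan := hc m hmD ((D.erase m).min' hne') hy hmlt ?_
      · have hMne : D.max' hne ≠ m := by
          intro h
          have := Finset.le_max' D _ hy
          rw [h] at this
          exact absurd hmlt (not_lt.2 this)
        have hmax : (D.erase m).max' hne' = D.max' hne := by
          refine le_antisymm (Finset.le_max' _ _ (Finset.mem_of_mem_erase
            ((D.erase m).max'_mem hne'))) (Finset.le_max' _ _ ?_)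
          exact Finset.mem_erase.2 ⟨hMne, D.max'_mem hne⟩
        rw [← Finset.add_sum_erase D _ hmD, key, hmax]
        linear_combination hcan
      · intro x hx hbet
        have hxm : x ≠ m := fun h => absurd (h ▸ hbet.1) (lt_irrefl m)
        exact absurd ((D.erase m).min'_le x (Finset.mem_erase.2 ⟨hxm, hx⟩))
          (not_le.2 hbet.2)

def gterm (a b : Finset V →₀ F) (I₀ π : Finset V) (v w : V) : F :=
  SG F I₀ (π.erase v) w *
      (a (sigw I₀ (π.erase v) w) * b (tauw I₀ (π.erase v) w)) *
    (-1) ^ (((π.erase v).filter (· < v)).card)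

def tsig (a b : Finset V →₀ F) (I₀ π : Finset V) (w : V) : F :=
  SG F I₀ π w * ((a ((sigw I₀ π w).erase w) *
      (-1) ^ ((((sigw I₀ π w).erase w).filter (· < w)).card)) * b (tauw I₀ π w))

def ttau (a b : Finset V →₀ F) (I₀ π : Finset V) (w : V) : F :=
  SG F I₀ π w * ((-1) ^ ((sigw I₀ π w).card) * (a (sigw I₀ π w) *
    (b ((tauw I₀ π w).erase w) *
      (-1) ^ ((((tauw I₀ π w).erase w).filter (· < w)).card))))

def T (a b : Finset V →₀ F) (I₀ ρ : Finset V) : F :=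
  ∑ w ∈ ρ, if w ∈ I₀ then 0
    else SG F I₀ ρ w * (a (sigw I₀ ρ w) * b (tauw I₀ ρ w))

lemma side_sig {a b : Finset V →₀ F} (hw : w ∈ π) (h0 : w ∉ I₀)
    (ha0 : ∑ v ∈ sigw I₀ π w, a ((sigw I₀ π w).erase v) *
      (-1 : F) ^ ((((sigw I₀ π w).erase v).filter (· < v)).card) = 0) :
    ∑ v ∈ (sigw I₀ π w).erase w, gterm a b I₀ π v w = tsig a b I₀ π w := by
  classical
  have step : ∀ v ∈ (sigw I₀ π w).erase w,
      gterm a b I₀ π v w = -(SG F I₀ π w * ((a ((sigw I₀ π w).erase v) *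
        (-1) ^ ((((sigw I₀ π w).erase v).filter (· < v)).card)) * b (tauw I₀ π w))) := by
    intro v hv
    rw [Finset.mem_erase, mem_sigw] at hv
    obtain ⟨hne, hvπ, hcase0⟩ := hv
    have hcase : v < w ∨ v ∈ I₀ := by
      rcases hcase0 with h | h
      · exact Or.inl (lt_of_le_of_ne h hne)
      · exact Or.inr h
    have face1 : sigw I₀ (π.erase v) w = (sigw I₀ π w).erase v := sigw_erase
    have face2 : tauw I₀ (π.erase v) w = tauw I₀ π w := by
      rw [tauw_erase, Finset.erase_eq_of_notMem (not_mem_tauw hcase)]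
    rw [gterm, face1, face2]
    linear_combination (a ((sigw I₀ π w).erase v) * b (tauw I₀ π w)) *
      signC1sig (F := F) hw h0 hvπ hne hcase
  have estep := Finset.sum_congr rfl step
  rw [estep]
  have hsum : ∑ v ∈ (sigw I₀ π w).erase w, SG F I₀ π w * ((a ((sigw I₀ π w).erase v) *
        (-1 : F) ^ ((((sigw I₀ π w).erase v).filter (· < v)).card)) * b (tauw I₀ π w)) +
      SG F I₀ π w * ((a ((sigw I₀ π w).erase w) *
        (-1 : F) ^ ((((sigw I₀ π w).erase w).filter (· < w)).card)) * b (tauw I₀ π w)) =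
      ∑ v ∈ sigw I₀ π w, SG F I₀ π w * ((a ((sigw I₀ π w).erase v) *
        (-1 : F) ^ ((((sigw I₀ π w).erase v).filter (· < v)).card)) * b (tauw I₀ π w)) :=
    Finset.sum_erase_add _ _ (mem_sigw_self hw)
  have hfull : ∑ v ∈ sigw I₀ π w, SG F I₀ π w * ((a ((sigw I₀ π w).erase v) *
        (-1 : F) ^ ((((sigw I₀ π w).erase v).filter (· < v)).card)) * b (tauw I₀ π w)) =
      SG F I₀ π w * ((∑ v ∈ sigw I₀ π w, a ((sigw I₀ π w).erase v) *
        (-1 : F) ^ ((((sigw I₀ π w).erase v).filter (· < v)).card)) * b (tauw I₀ π w)) := by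
    rw [Finset.sum_mul, Finset.mul_sum]
  simp only [Finset.sum_neg_distrib]
  rw [hfull, ha0] at hsum
  rw [tsig]
  linear_combination -hsum

lemma side_tau {a b : Finset V →₀ F} (hw : w ∈ π) (h0 : w ∉ I₀)
    (hb0 : ∑ v ∈ tauw I₀ π w, b ((tauw I₀ π w).erase v) *
      (-1 : F) ^ ((((tauw I₀ π w).erase v).filter (· < v)).card) = 0) :
    ∑ v ∈ (tauw I₀ π w).erase w, gterm a b I₀ π v w = ttau a b I₀ π w := by
  classical
  have step : ∀ v ∈ (tauw I₀ π w).erase w,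
      gterm a b I₀ π v w = -(SG F I₀ π w * ((-1) ^ ((sigw I₀ π w).card) *
        (a (sigw I₀ π w) * (b ((tauw I₀ π w).erase v) *
          (-1) ^ ((((tauw I₀ π w).erase v).filter (· < v)).card))))) := by
    intro v hv
    rw [Finset.mem_erase, mem_tauw] at hv
    obtain ⟨hne, hvπ, hwle, hv0⟩ := hv
    have hwv : w < v := lt_of_le_of_ne hwle (Ne.symm hne)
    have face1 : sigw I₀ (π.erase v) w = sigw I₀ π w := by
      rw [sigw_erase, Finset.erase_eq_of_notMem (not_mem_sigw hwv hv0)]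
    have face2 : tauw I₀ (π.erase v) w = (tauw I₀ π w).erase v := tauw_erase
    rw [gterm, face1, face2]
    linear_combination (a (sigw I₀ π w) * b ((tauw I₀ π w).erase v)) *
      signC1tau (F := F) hw h0 hvπ hwv hv0
  have estep := Finset.sum_congr rfl step
  rw [estep]
  have hsum : ∑ v ∈ (tauw I₀ π w).erase w, SG F I₀ π w * ((-1 : F) ^ ((sigw I₀ π w).card) *
        (a (sigw I₀ π w) * (b ((tauw I₀ π w).erase v) *
          (-1 : F) ^ ((((tauw I₀ π w).erase v).filter (· < v)).card)))) +
      SG F I₀ π w * ((-1 : F) ^ ((sigw I₀ π w).card) *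
        (a (sigw I₀ π w) * (b ((tauw I₀ π w).erase w) *
          (-1 : F) ^ ((((tauw I₀ π w).erase w).filter (· < w)).card)))) =
      ∑ v ∈ tauw I₀ π w, SG F I₀ π w * ((-1 : F) ^ ((sigw I₀ π w).card) *
        (a (sigw I₀ π w) * (b ((tauw I₀ π w).erase v) *
          (-1 : F) ^ ((((tauw I₀ π w).erase v).filter (· < v)).card)))) :=
    Finset.sum_erase_add _ _ (mem_tauw_self hw h0)
  have hfull : ∑ v ∈ tauw I₀ π w, SG F I₀ π w * ((-1 : F) ^ ((sigw I₀ π w).card) *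
        (a (sigw I₀ π w) * (b ((tauw I₀ π w).erase v) *
          (-1 : F) ^ ((((tauw I₀ π w).erase v).filter (· < v)).card)))) =
      SG F I₀ π w * ((-1 : F) ^ ((sigw I₀ π w).card) * (a (sigw I₀ π w) *
        ((∑ v ∈ tauw I₀ π w, b ((tauw I₀ π w).erase v) *
          (-1 : F) ^ ((((tauw I₀ π w).erase v).filter (· < v)).card))))) := by
    rw [Finset.mul_sum, Finset.mul_sum, Finset.mul_sum]
  simp only [Finset.sum_neg_distrib]
  rw [hfull, hb0] at hsum
  rw [ttau]
  linear_combination -hsum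

theorem core (a b : Finset V →₀ F) (I₀ π : Finset V)
    (ha0 : ∀ σ ⊆ π, ∑ v ∈ σ, a (σ.erase v) *
      (-1 : F) ^ (((σ.erase v).filter (· < v)).card) = 0)
    (hb0 : ∀ σ ⊆ π, ∑ v ∈ σ, b (σ.erase v) *
      (-1 : F) ^ (((σ.erase v).filter (· < v)).card) = 0)
    (hbe : b ∅ = 0) :
    ∑ v ∈ π, T a b I₀ (π.erase v) * (-1 : F) ^ (((π.erase v).filter (· < v)).card)
      = (-1 : F) ^ (inv (π \ I₀) (π ∩ I₀)) * (a (π ∩ I₀) * b (π \ I₀)) := by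
  classical
  set D := π.filter (fun w => w ∉ I₀) with hD
  have claim1 : ∑ v ∈ π, T a b I₀ (π.erase v) *
      (-1 : F) ^ (((π.erase v).filter (· < v)).card)
      = ∑ w ∈ D, ∑ v ∈ π.erase w, gterm a b I₀ π v w := by
    have lhs_eq : ∀ v ∈ π, T a b I₀ (π.erase v) *
        (-1 : F) ^ (((π.erase v).filter (· < v)).card) =
        ∑ w ∈ π, if w ≠ v ∧ w ∉ I₀ then gterm a b I₀ π v w else 0 := by
      intro v hv
      rw [T, Finset.sum_mul]
      rw [← Finset.sum_erase (f := fun w => if w ≠ v ∧ w ∉ I₀ then gterm a b I₀ π v w else 0)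
        π (a := v) (by simp)]
      refine Finset.sum_congr rfl fun w hw => ?_
      have hne : w ≠ v := (Finset.mem_erase.1 hw).1
      by_cases hI : w ∈ I₀
      · simp [hI, hne]
      · have hcond : w ≠ v ∧ w ∉ I₀ := ⟨hne, hI⟩
        rw [if_pos hcond, if_neg hI, gterm]
    have elhs := Finset.sum_congr rfl lhs_eq
    rw [elhs, Finset.sum_comm]
    rw [hD, Finset.sum_filter]
    refine Finset.sum_congr rfl fun w hw => ?_
    by_cases hI : w ∈ I₀
    · simp [hI]
    · rw [if_pos hI]
      rw [← Finset.sum_erase (f := fun v => if w ≠ v ∧ w ∉ I₀ then gterm a b I₀ π v w else 0)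
        π (a := w) (by simp)]
      refine Finset.sum_congr rfl fun v hv => ?_
      have hcond : w ≠ v ∧ w ∉ I₀ := ⟨Ne.symm (Finset.mem_erase.1 hv).1, hI⟩
      rw [if_pos hcond]
  have claim2 : ∀ w ∈ D, ∑ v ∈ π.erase w, gterm a b I₀ π v w =
      tsig a b I₀ π w + ttau a b I₀ π w := by
    intro w hwD
    rw [hD, Finset.mem_filter] at hwD
    obtain ⟨hw, h0⟩ := hwD
    rw [← Finset.sum_filter_add_sum_filter_not (π.erase w) (fun v => v < w ∨ v ∈ I₀)
      (gterm a b I₀ π · w), part_sig hw, part_tau hw,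
      side_sig hw h0 (ha0 _ sigw_subset), side_tau hw h0 (hb0 _ tauw_subset)]
  have eclaim := Finset.sum_congr rfl claim2
  rw [claim1, eclaim]
  by_cases hne : D.Nonempty
  · have hmem : ∀ x ∈ D, x ∈ π ∧ x ∉ I₀ := fun x hx => Finset.mem_filter.1 hx
    have hcancel : ∀ w ∈ D, ∀ w' ∈ D, w < w' → (∀ x ∈ D, ¬(w < x ∧ x < w')) →
        ttau a b I₀ π w + tsig a b I₀ π w' = 0 := by
      intro w hw w' hw' hlt hadj
      obtain ⟨hwπ, hw0⟩ := hmem w hw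
      obtain ⟨hw'π, hw'0⟩ := hmem w' hw'
      have hadj' : ∀ x ∈ π, x ∉ I₀ → ¬(w < x ∧ x < w') := fun x hx h0x =>
        hadj x (Finset.mem_filter.2 ⟨hx, h0x⟩)
      have hae : a (sigw I₀ π w) = a ((sigw I₀ π w').erase w') := by
        rw [sigw_adj hw'0 hlt hadj']
      have hbe2 : b ((tauw I₀ π w).erase w) = b (tauw I₀ π w') := by
        rw [tauw_adj (fun _ => trivial) hlt hadj']
      rw [ttau, tsig, hae, hbe2]
      linear_combination (a ((sigw I₀ π w').erase w') * b (tauw I₀ π w')) *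
        signC2 (F := F) hwπ hw0 hw'π hw'0 hlt hadj'
    rw [telescope D (tsig a b I₀ π) (ttau a b I₀ π) hne hcancel]
    obtain ⟨hwπ, h0⟩ := hmem _ (D.min'_mem hne)
    obtain ⟨hMπ, hM0⟩ := hmem _ (D.max'_mem hne)
    have hmin : ∀ x ∈ π, x ∉ I₀ → D.min' hne ≤ x := fun x hx h0x =>
      D.min'_le x (Finset.mem_filter.2 ⟨hx, h0x⟩)
    have hmax : ∀ x ∈ π, x ∉ I₀ → x ≤ D.max' hne := fun x hx h0x =>
      D.le_max' x (Finset.mem_filter.2 ⟨hx, h0x⟩)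
    have hts : tsig a b I₀ π (D.min' hne) =
        (-1 : F) ^ (inv (π \ I₀) (π ∩ I₀)) * (a (π ∩ I₀) * b (π \ I₀)) := by
      have haf : a ((sigw I₀ π (D.min' hne)).erase (D.min' hne)) = a (π ∩ I₀) := by
        rw [sigw_min_erase hwπ h0 hmin]
      have hbf : b (tauw I₀ π (D.min' hne)) = b (π \ I₀) := by
        rw [tauw_min hwπ hmin]
      rw [tsig, haf, hbf]
      linear_combination (a (π ∩ I₀) * b (π \ I₀)) * signC3 (F := F) hwπ h0 hmin
    have htt : ttau a b I₀ π (D.max' hne) = 0 := by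
      rw [ttau, tauw_max_erase hmax, hbe]
      ring
    rw [hts, htt, add_zero]
  · rw [Finset.not_nonempty_iff_eq_empty] at hne
    rw [hne, Finset.sum_empty]
    have hBempty : π \ I₀ = ∅ := by
      rw [Finset.sdiff_eq_filter]
      exact hne
    rw [hBempty, hbe]
    ring

end MuAux

section ApplyLemmas

variable {V : Type*} [Fintype V] [LinearOrder V] {F : Type*} [Field F]

open MuAux

lemma sum_ite_push {α M : Type*} [AddCommMonoid M] {c : Prop} [Decidable c]
    (S : Finset α) (X : α → M) :
    (∑ x ∈ S, if c then X x else 0) = if c then ∑ x ∈ S, X x else 0 := by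
  split_ifs <;> simp

lemma ite_and_collapse {M : Type*} [Zero M] {c d : Prop} [Decidable c] [Decidable d]
    (x : M) : (if c then (if d then x else 0) else 0) = if c ∧ d then x else 0 := by
  split_ifs with h1 h2 h3 <;> tauto

lemma ite_congr_zero {M : Type*} [Zero M] {c d : Prop} [Decidable c] [Decidable d]
    {x y : M} (h : c ↔ d) (hxy : d → x = y) : (if c then x else 0) = (if d then y else 0) := by
  split_ifs with h1 h2
  · exact hxy h2
  · exact absurd (h.1 h1) h2
  · exact absurd (h.2 ‹d›) h1
  · rfl

lemma inter_union_sdiff_eq (π I₀ : Finset V) : π ∩ I₀ ∪ π \ I₀ = π := by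
  ext x
  simp only [Finset.mem_union, Finset.mem_inter, Finset.mem_sdiff]
  tauto

lemma starC_apply (a b : Finset V →₀ F) (s t : Finset V) :
    starC F a b (s, t) = a s * b t := by
  classical
  rw [starC, Finsupp.sum_apply]
  rw [Finsupp.sum]
  have step : ∀ σ ∈ a.support, (Finsupp.sum b fun τ r => Finsupp.single (σ, τ) (a σ * r)) (s, t)
      = ∑ τ ∈ b.support, if σ = s then (if τ = t then a σ * b τ else 0) else 0 := by
    intro σ _
    rw [Finsupp.sum_apply, Finsupp.sum]
    refine Finset.sum_congr rfl fun τ _ => ?_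
    rw [Finsupp.single_apply]
    by_cases h1 : σ = s <;> by_cases h2 : τ = t <;>
      simp [h1, h2, Prod.ext_iff]
  rw [Finset.sum_congr rfl step]
  have step2 : ∀ σ ∈ a.support, (∑ τ ∈ b.support, if σ = s then (if τ = t then a σ * b τ else 0) else 0)
      = if σ = s then a σ * b t else 0 := by
    intro σ _
    rw [sum_ite_push]
    by_cases h1 : σ = s
    · rw [if_pos h1, if_pos h1, Finset.sum_ite_eq' b.support t]
      by_cases h2 : t ∈ b.support
      · rw [if_pos h2]
      · rw [if_neg h2, Finsupp.notMem_support_iff.1 h2, mul_zero]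
    · rw [if_neg h1, if_neg h1]
  rw [Finset.sum_congr rfl step2, Finset.sum_ite_eq' a.support s]
  by_cases h1 : s ∈ a.support
  · rw [if_pos h1]
  · rw [if_neg h1, Finsupp.notMem_support_iff.1 h1, zero_mul]

lemma cobdry_apply (K : Finset (Finset V)) (c : Finset V →₀ F) (π : Finset V) :
    cobdry F K c π = if π ∈ K then
      ∑ v ∈ π, c (π.erase v) * (-1 : F) ^ (((π.erase v).filter (· < v)).card) else 0 := by
  classical
  rw [cobdry, Finsupp.sum_apply, Finsupp.sum]
  have step : ∀ σ ∈ c.support,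
      (∑ v : V, if v ∉ σ ∧ insert v σ ∈ K then
        (c σ * (-1 : F) ^ ((σ.filter (· < v)).card)) • Finsupp.single (insert v σ) 1
        else 0) π
      = ∑ v : V, if σ = π.erase v then
          (if v ∈ π ∧ π ∈ K then c σ * (-1 : F) ^ ((σ.filter (· < v)).card) else 0) else 0 := by
    intro σ _
    rw [Finsupp.finset_sum_apply]
    refine Finset.sum_congr rfl fun v _ => ?_
    rw [apply_ite (fun f : Finset V →₀ F => f π), Finsupp.smul_apply, Finsupp.single_apply,
      Finsupp.coe_zero, Pi.zero_apply, smul_eq_mul, mul_ite, mul_one, mul_zero,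
      ite_and_collapse, ite_and_collapse]
    have key : (v ∉ σ ∧ insert v σ ∈ K) ∧ insert v σ = π ↔
        σ = π.erase v ∧ (v ∈ π ∧ π ∈ K) := by
      constructor
      · rintro ⟨⟨h1, h2⟩, h3⟩
        refine ⟨by rw [← h3, Finset.erase_insert h1], h3 ▸ Finset.mem_insert_self v σ,
          h3 ▸ h2⟩
      · rintro ⟨rfl, hv, hKK⟩
        have hie : insert v (π.erase v) = π := Finset.insert_erase hv
        exact ⟨⟨Finset.notMem_erase v π, by rw [hie]; exact hKK⟩, hie⟩
    exact if_congr key rfl rfl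
  rw [Finset.sum_congr rfl step, Finset.sum_comm]
  have step2 : ∀ v ∈ (Finset.univ : Finset V),
      (∑ σ ∈ c.support, if σ = π.erase v then
        (if v ∈ π ∧ π ∈ K then c σ * (-1 : F) ^ ((σ.filter (· < v)).card) else 0) else 0)
      = if v ∈ π ∧ π ∈ K then
          c (π.erase v) * (-1 : F) ^ (((π.erase v).filter (· < v)).card) else 0 := by
    intro v _
    rw [Finset.sum_ite_eq' c.support (π.erase v)]
    by_cases h1 : π.erase v ∈ c.support
    · rw [if_pos h1]
    · rw [if_neg h1, Finsupp.notMem_support_iff.1 h1]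
      simp
  rw [Finset.sum_congr rfl step2]
  by_cases hK : π ∈ K
  · simp only [hK, and_true, if_pos]
    rw [Finset.sum_ite_mem, Finset.univ_inter]
  · simp [hK]

lemma mu0star_apply (K : Finset (Finset V)) (I₀ : Finset V)
    (c : (Finset V × Finset V) →₀ F) (π : Finset V) :
    mu0star F K I₀ c π = if π ∈ K then
      (-1 : F) ^ (MuAux.inv (π \ I₀) (π ∩ I₀)) * c (π ∩ I₀, π \ I₀) else 0 := by
  classical
  rw [mu0star, Finsupp.sum_apply, Finsupp.sum]
  have step : ∀ st ∈ c.support,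
      (if st.1 ⊆ I₀ ∧ st.2 ⊆ I₀ᶜ ∧ st.1 ∪ st.2 ∈ K then
        ((-1 : F) ^ (((st.2 ×ˢ st.1).filter fun xy => xy.1 < xy.2).card)) •
          Finsupp.single (st.1 ∪ st.2) (c st) else 0) π
      = if st = (π ∩ I₀, π \ I₀) then
          (if π ∈ K then (-1 : F) ^ (MuAux.inv (π \ I₀) (π ∩ I₀)) * c st else 0) else 0 := by
    intro st _
    rw [apply_ite (fun f : Finset V →₀ F => f π), Finsupp.smul_apply, Finsupp.single_apply,
      Finsupp.coe_zero, Pi.zero_apply, smul_eq_mul, mul_ite, mul_zero,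
      ite_and_collapse, ite_and_collapse]
    have key : (st.1 ⊆ I₀ ∧ st.2 ⊆ I₀ᶜ ∧ st.1 ∪ st.2 ∈ K) ∧ st.1 ∪ st.2 = π ↔
        st = (π ∩ I₀, π \ I₀) ∧ π ∈ K := by
      constructor
      · rintro ⟨⟨h1, h2, h3⟩, h4⟩
        have e1 : st.1 = π ∩ I₀ := by
          ext x
          simp only [Finset.mem_inter]
          constructor
          · intro hx
            exact ⟨h4 ▸ Finset.mem_union_left _ hx, h1 hx⟩
          · rintro ⟨hπ, hI⟩
            rcases Finset.mem_union.1 (h4 ▸ hπ : x ∈ st.1 ∪ st.2) with h | h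
            · exact h
            · exact absurd hI (Finset.mem_compl.1 (h2 h))
        have e2 : st.2 = π \ I₀ := by
          ext x
          simp only [Finset.mem_sdiff]
          constructor
          · intro hx
            exact ⟨h4 ▸ Finset.mem_union_right _ hx, Finset.mem_compl.1 (h2 hx)⟩
          · rintro ⟨hπ, hI⟩
            rcases Finset.mem_union.1 (h4 ▸ hπ : x ∈ st.1 ∪ st.2) with h | h
            · exact absurd (h1 h) hI
            · exact h
        exact ⟨Prod.ext e1 e2, h4 ▸ h3⟩
      · rintro ⟨rfl, hπK⟩
        have hu : π ∩ I₀ ∪ π \ I₀ = π := inter_union_sdiff_eq π I₀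
        refine ⟨⟨Finset.inter_subset_right, ?_, by rw [hu]; exact hπK⟩, hu⟩
        intro x hx
        exact Finset.mem_compl.2 (Finset.mem_sdiff.1 hx).2
    refine ite_congr_zero key ?_
    rintro ⟨rfl, -⟩
    rfl
  rw [Finset.sum_congr rfl step, Finset.sum_ite_eq' c.support (π ∩ I₀, π \ I₀)]
  by_cases h1 : (π ∩ I₀, π \ I₀) ∈ c.support
  · rw [if_pos h1]
  · rw [if_neg h1, Finsupp.notMem_support_iff.1 h1]
    simp

lemma prismJdual_apply (K : Finset (Finset V)) (I₀ : Finset V)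
    (c : (Finset V × Finset V) →₀ F) (π : Finset V) :
    prismJdual F K I₀ c π =
      if π ∈ K then ((prismJ F I₀ π).sum fun x r => c x * r) else 0 := by
  classical
  rw [prismJdual, Finsupp.finset_sum_apply]
  have step : ∀ ρ ∈ K, (((prismJ F I₀ ρ).sum fun x r => c x * r) • Finsupp.single ρ (1:F)) π
      = if ρ = π then ((prismJ F I₀ ρ).sum fun x r => c x * r) else 0 := by
    intro ρ _
    rw [Finsupp.smul_apply, Finsupp.single_apply, smul_eq_mul, mul_ite, mul_one, mul_zero]
  rw [Finset.sum_congr rfl step, Finset.sum_ite_eq' K π]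

lemma prism_pair (a b : Finset V →₀ F) (I₀ ρ : Finset V) :
    ((prismJ F I₀ ρ).sum fun x r => starC F a b x * r) = MuAux.T a b I₀ ρ := by
  classical
  rw [Finsupp.sum_fintype _ _ (fun x => mul_zero _)]
  have hPdef : prismJ F I₀ ρ = ∑ w ∈ ρ, (if w ∈ I₀ then 0
      else (SG F I₀ ρ w) • Finsupp.single (sigw I₀ ρ w, tauw I₀ ρ w) (1:F)) := rfl
  rw [hPdef]
  have step : ∀ x ∈ (Finset.univ : Finset (Finset V × Finset V)),
      starC F a b x * (∑ w ∈ ρ, (if w ∈ I₀ then 0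
        else (SG F I₀ ρ w) • Finsupp.single (sigw I₀ ρ w, tauw I₀ ρ w) (1:F))) x
      = ∑ w ∈ ρ, starC F a b x * ((if w ∈ I₀ then 0
        else (SG F I₀ ρ w) • Finsupp.single (sigw I₀ ρ w, tauw I₀ ρ w) (1:F)) x) := by
    intro x _
    rw [Finsupp.finset_sum_apply, Finset.mul_sum]
  rw [Finset.sum_congr rfl step, Finset.sum_comm, MuAux.T]
  refine Finset.sum_congr rfl fun w _ => ?_
  by_cases hI : w ∈ I₀
  · simp [hI]
  · rw [if_neg hI]
    have inner : ∀ x ∈ (Finset.univ : Finset (Finset V × Finset V)),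
        starC F a b x * (((SG F I₀ ρ w) • Finsupp.single (sigw I₀ ρ w, tauw I₀ ρ w) (1:F)) x)
        = if (sigw I₀ ρ w, tauw I₀ ρ w) = x then starC F a b x * SG F I₀ ρ w else 0 := by
      intro x _
      rw [Finsupp.smul_apply, Finsupp.single_apply, smul_eq_mul, mul_ite, mul_one, mul_zero,
        mul_ite, mul_zero]
    rw [Finset.sum_congr rfl inner, Finset.sum_ite_eq, if_pos (Finset.mem_univ _),
      starC_apply, if_neg hI]
    ring

theorem mu0_main {V : Type*} [Fintype V] [LinearOrder V] {F : Type*} [Field F]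
    (K : Finset (Finset V)) (hK : ∀ σ ∈ K, ∀ τ ⊆ σ, τ ∈ K)
    (hV : ∀ v : V, ({v} : Finset V) ∈ K)
    (I₀ : Finset V) (h0 : I₀.Nonempty)
    (a b : Finset V →₀ F) (hca : cobdry F K a = 0) (hcb : cobdry F K b = 0) :
    mu0star F K I₀ (starC F a b) =
      cobdry F K (prismJdual F K I₀ (starC F a b)) := by
  classical
  have hbe : b ∅ = 0 := by
    obtain ⟨v₀, -⟩ := h0
    have h := DFunLike.congr_fun hcb ({v₀} : Finset V)
    rw [cobdry_apply, if_pos (hV v₀)] at h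
    simpa using h
  have hcoa : ∀ σ ∈ K, ∑ v ∈ σ, a (σ.erase v) *
      (-1 : F) ^ (((σ.erase v).filter (· < v)).card) = 0 := by
    intro σ hσ
    have h := DFunLike.congr_fun hca σ
    rw [cobdry_apply, if_pos hσ] at h
    simpa using h
  have hcob : ∀ σ ∈ K, ∑ v ∈ σ, b (σ.erase v) *
      (-1 : F) ^ (((σ.erase v).filter (· < v)).card) = 0 := by
    intro σ hσ
    have h := DFunLike.congr_fun hcb σ
    rw [cobdry_apply, if_pos hσ] at h
    simpa using h
  ext π
  rw [mu0star_apply, cobdry_apply]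
  by_cases hπ : π ∈ K
  · rw [if_pos hπ, if_pos hπ, starC_apply]
    have hrw : ∀ v ∈ π, prismJdual F K I₀ (starC F a b) (π.erase v) *
        (-1 : F) ^ (((π.erase v).filter (· < v)).card)
        = MuAux.T a b I₀ (π.erase v) * (-1 : F) ^ (((π.erase v).filter (· < v)).card) := by
      intro v _
      rw [prismJdual_apply, if_pos (hK π hπ _ (Finset.erase_subset _ _)), prism_pair]
    have e := Finset.sum_congr rfl hrw
    rw [e, MuAux.core a b I₀ π (fun σ hσ => hcoa σ (hK π hπ σ hσ))
      (fun σ hσ => hcob σ (hK π hπ σ hσ)) hbe]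
  · rw [if_neg hπ, if_neg hπ]

end ApplyLemmas

/-- For an ordered simplicial complex `K` with vertex partition `V(K) = I_0 ⊔ I_1` into
nonempty sets and cocycles `a, b ∈ C̃*(K; F)`, one has
`μ_0^*(a ⋆ b) = δ(P(J)^*(a ⋆ b))`; in particular the class of `μ_0^*(a ⋆ b)` vanishes
in `H̃*(K; F)`. -/
theorem mu0_pullback_is_coboundary [DecidableEq V] (K : Finset (Finset V))
    (hK : IsComplex K) (hV : ∀ v : V, ({v} : Finset V) ∈ K)
    (I₀ : Finset V) (h0 : I₀.Nonempty) (h1 : I₀ᶜ.Nonempty)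
    (a b : Finset V →₀ F)
    (ha : ∀ σ ∈ a.support, σ ∈ K) (hb : ∀ σ ∈ b.support, σ ∈ K)
    (hca : cobdry F K a = 0) (hcb : cobdry F K b = 0) :
    mu0star F K I₀ (starC F a b) =
      cobdry F K (prismJdual F K I₀ (starC F a b)) := by
  exact mu0_main K (fun σ hσ τ hτ => hK σ hσ τ hτ) hV I₀ h0 a b hca hcb
end
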